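/- arXiv:1007.5458 — 8 statements merged into one kernel-verified Lean document; each statement's English description precedes it below -/
import Mathlib

section
/- Let L be an n-globular K-vector space with linear identity maps and set V_i = ker(s : L_i → L_{i-1}) (with V_0 = L_0). For each m ∈ {0,…,n}, the linear map α_m : V_0 ⊕ ⋯ ⊕ V_m → L_m defined by α_m(v_0,…,v_m) = Σ_{i=0}^{m} 1^{m-i}_{v_i} (where 1^k denotes the k-fold iterate of the identity map and 1^0 = id) is a linear isomorphism; its inverse β_m is given component by component (computed from left to right) by β_m(a) = (s^m(a), …, s^{m-i}(a − Σ_{j=0}^{i-1} 1^{m-j}_{p_j β_m(a)}), …, a − Σ_{j=0}^{m-1} 1^{m-j}_{p_j β_m(a)}), where p_j denotes the projection onto V_j. -/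
structure LinGlob (K : Type) [Field K] (n : ℕ) : Type 1 where
  L : ℕ → Type
  acg : ∀ m, AddCommGroup (L m)
  mod : ∀ m, Module K (L m)
  trunc : ∀ m, n < m → Subsingleton (L m)
  s : ∀ m, L (m + 1) →ₗ[K] L m
  t : ∀ m, L (m + 1) →ₗ[K] L m
  glob_s : ∀ m (a : L (m + 2)), s m (s (m + 1) a) = s m (t (m + 1) a)
  glob_t : ∀ m (a : L (m + 2)), t m (s (m + 1) a) = t m (t (m + 1) a)

attribute [instance] LinGlob.acg LinGlob.mod

namespace LinGlob

variable {K : Type} [Field K] {n : ℕ}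

/-- Cast between levels. -/
def castL (G : LinGlob K n) {a b : ℕ} (h : a = b) (x : G.L a) : G.L b := h ▸ x

/-- One application of the source map (junk identity at level 0). -/
def sStep (G : LinGlob K n) : ∀ m, G.L m → G.L (m - 1)
  | 0, a => a
  | (m + 1), a => G.s m a

/-- Iterated source map `s^k : L m → L (m-k)`. -/
def sFrom (G : LinGlob K n) (m : ℕ) : ∀ k, G.L m → G.L (m - k)
  | 0, a => a
  | (k + 1), a => G.sStep (m - k) (G.sFrom m k a)

/-- Iterated source map `s^{m-j} : L m → L j` for `j ≤ m`. -/
def sDownTo (G : LinGlob K n) (m j : ℕ) (h : j ≤ m) (a : G.L m) : G.L j :=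
  G.castL (by omega : m - (m - j) = j) (G.sFrom m (m - j) a)

end LinGlob

/-- An n-globular vector space with linear identity maps. -/
structure LinGlobId (K : Type) [Field K] (n : ℕ) extends LinGlob K n where
  one : ∀ m, L m →ₗ[K] L (m + 1)
  one_s : ∀ m, m < n → ∀ a, s m (one m a) = a
  one_t : ∀ m, m < n → ∀ a, t m (one m a) = a

namespace LinGlobId

variable {K : Type} [Field K] {n : ℕ}

/-- Iterated identity map `1^k : L j → L (j+k)`. -/
def oneUp (G : LinGlobId K n) : ∀ (j k : ℕ), G.L j → G.L (j + k)
  | _, 0, a => a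
  | j, (k + 1), a => G.one (j + k) (G.oneUp j k a)

/-- Iterated identity map `1^{m-j} : L j → L m` for `j ≤ m`. -/
def oneUpTo (G : LinGlobId K n) (j m : ℕ) (h : j ≤ m) (a : G.L j) : G.L m :=
  G.toLinGlob.castL (by omega : j + (m - j) = m) (G.oneUp j (m - j) a)

/-- The map `α_m : V_0 ⊕ ⋯ ⊕ V_m → L_m`, `α_m (v_0,…,v_m) = Σᵢ 1^{m-i}_{v_i}`
(defined here on the full product `Π i, L i`; it is restricted to the subspace
`Π i, V i` in the statement below). -/
def alphaFun (G : LinGlobId K n) (m : ℕ) (v : ∀ i : Fin (m + 1), G.L i) : G.L m :=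
  ∑ i : Fin (m + 1), G.oneUpTo i m (Fin.is_le i) (v i)

/-- The partial sums `c_i = Σ_{j<i} 1^{m-j}_{p_j β_m(a)}` entering the recursive
definition of `β_m` ("computed from left to right"). -/
def betaC (G : LinGlobId K n) (m : ℕ) (a : G.L m) : ℕ → G.L m
  | 0 => 0
  | (i + 1) =>
      G.betaC m a i +
        (if h : i ≤ m then
          G.oneUpTo i m h (G.toLinGlob.sDownTo m i h (a - G.betaC m a i))
        else 0)

/-- The map `β_m : L_m → V_0 ⊕ ⋯ ⊕ V_m`,
`β_m(a)_i = s^{m-i}(a − Σ_{j=0}^{i-1} 1^{m-j}_{p_j β_m(a)})`. -/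
def betaFun (G : LinGlobId K n) (m : ℕ) (a : G.L m) (i : Fin (m + 1)) : G.L i :=
  G.toLinGlob.sDownTo m i (Fin.is_le i) (a - G.betaC m a i)

end LinGlobId

/-! Since `s ∘ 1 = id` below level `n`, `s^{m-i} ∘ 1^{m-j} = s^{j-i}` for `i ≤ j ≤ m ≤ n`, and this
vanishes on `V_j` when `i < j`. So `s^{m-i}` applied to `α_m(v)` returns `v_i` once `v_j = 0` for
all `j < i`, and `α_m` is injective on `V_0 ⊕ ⋯ ⊕ V_m`. The `i`-th step of `β_m` subtracts
`1^{m-i}(s^{m-i} r)` from the remainder `r`, which kills `s^{m-i} r`; hence the final remainder is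
`0`, i.e. `α_m ∘ β_m = id`, and `β_m` lands in the kernels. Injectivity gives `β_m ∘ α_m = id`. -/

namespace LinGlob

variable {K : Type} [Field K] {n : ℕ} (G : LinGlob K n)

theorem sDownTo_eq_castL_sFrom {m i : ℕ} (k : ℕ) (hk : i + k = m) (h : i ≤ m) (a : G.L m) :
    G.sDownTo m i h a = G.castL (by omega) (G.sFrom m k a) := by
  obtain rfl : k = m - i := by omega
  rfl

theorem castL_sStep {p i : ℕ} (e : p = i + 1) (e' : p - 1 = i) (x : G.L p) :
    G.castL e' (G.sStep p x) = G.s i (G.castL e x) := by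
  subst e; rfl

@[simp] theorem sDownTo_self {m : ℕ} (h : m ≤ m) (a : G.L m) : G.sDownTo m m h a = a := by
  rw [G.sDownTo_eq_castL_sFrom 0 (Nat.add_zero m)]; rfl

theorem s_sDownTo {m i : ℕ} (h : i + 1 ≤ m) (h' : i ≤ m) (a : G.L m) :
    G.s i (G.sDownTo m (i + 1) h a) = G.sDownTo m i h' a := by
  rw [G.sDownTo_eq_castL_sFrom (m - (i + 1)) (by omega),
    G.sDownTo_eq_castL_sFrom (m - (i + 1) + 1) (by omega)]
  exact (G.castL_sStep _ _ _).symm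

theorem sDownTo_add {m i : ℕ} (h : i ≤ m) (x y : G.L m) :
    G.sDownTo m i h (x + y) = G.sDownTo m i h x + G.sDownTo m i h y := by
  induction h using Nat.decreasingInduction with
  | self => simp
  | of_succ i h ih => rw [← G.s_sDownTo h, ← G.s_sDownTo h, ← G.s_sDownTo h, ih, map_add]

theorem sDownTo_succ {i j : ℕ} (h : i ≤ j) (h' : i ≤ j + 1) (b : G.L (j + 1)) :
    G.sDownTo (j + 1) i h' b = G.sDownTo j i h (G.s j b) := by
  induction h using Nat.decreasingInduction with
  | self => rw [← G.s_sDownTo le_rfl, sDownTo_self, sDownTo_self]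
  | of_succ i h ih => rw [← G.s_sDownTo (by omega), ← G.s_sDownTo h, ih]

theorem sDownTo_sub {m i : ℕ} (h : i ≤ m) (x y : G.L m) :
    G.sDownTo m i h (x - y) = G.sDownTo m i h x - G.sDownTo m i h y :=
  (AddMonoidHom.mk' (G.sDownTo m i h) (G.sDownTo_add h)).map_sub x y

theorem sDownTo_zero {m i : ℕ} (h : i ≤ m) : G.sDownTo m i h 0 = 0 :=
  (AddMonoidHom.mk' (G.sDownTo m i h) (G.sDownTo_add h)).map_zero

theorem sDownTo_sum {m i : ℕ} (h : i ≤ m) {ι : Type*} (s : Finset ι) (f : ι → G.L m) :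
    G.sDownTo m i h (∑ j ∈ s, f j) = ∑ j ∈ s, G.sDownTo m i h (f j) :=
  map_sum (AddMonoidHom.mk' (G.sDownTo m i h) (G.sDownTo_add h)) f s

end LinGlob

namespace LinGlobId

variable {K : Type} [Field K] {n : ℕ} (G : LinGlobId K n)

theorem oneUpTo_eq_castL_oneUp {j m : ℕ} (k : ℕ) (hk : j + k = m) (h : j ≤ m) (b : G.L j) :
    G.oneUpTo j m h b = G.castL hk (G.oneUp j k b) := by
  obtain rfl : k = m - j := by omega
  rfl

@[simp] theorem oneUpTo_self {j : ℕ} (h : j ≤ j) (b : G.L j) : G.oneUpTo j j h b = b := by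
  rw [G.oneUpTo_eq_castL_oneUp 0 (Nat.add_zero j)]; rfl

theorem castL_one {p q : ℕ} (e : p = q) (e' : p + 1 = q + 1) (x : G.L p) :
    G.castL e' (G.one p x) = G.one q (G.castL e x) := by
  subst e; rfl

theorem oneUpTo_succ {j m : ℕ} (h : j ≤ m) (h' : j ≤ m + 1) (b : G.L j) :
    G.oneUpTo j (m + 1) h' b = G.one m (G.oneUpTo j m h b) := by
  rw [G.oneUpTo_eq_castL_oneUp (m - j + 1) (by omega),
    G.oneUpTo_eq_castL_oneUp (m - j) (by omega)]
  exact G.castL_one (p := j + (m - j)) (by omega) _ _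

theorem oneUpTo_add {j m : ℕ} (h : j ≤ m) (x y : G.L j) :
    G.oneUpTo j m h (x + y) = G.oneUpTo j m h x + G.oneUpTo j m h y := by
  induction m, h using Nat.le_induction with
  | base => simp
  | succ m h ih => rw [G.oneUpTo_succ h, G.oneUpTo_succ h, G.oneUpTo_succ h, ih, map_add]

theorem oneUpTo_smul {j m : ℕ} (h : j ≤ m) (c : K) (x : G.L j) :
    G.oneUpTo j m h (c • x) = c • G.oneUpTo j m h x := by
  induction m, h using Nat.le_induction with
  | base => simp
  | succ m h ih => rw [G.oneUpTo_succ h, G.oneUpTo_succ h, ih, map_smul]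

theorem oneUpTo_zero {j m : ℕ} (h : j ≤ m) : G.oneUpTo j m h 0 = 0 :=
  (AddMonoidHom.mk' (G.oneUpTo j m h) (G.oneUpTo_add h)).map_zero

theorem sDownTo_oneUpTo {i j m : ℕ} (hm : m ≤ n) (hij : i ≤ j) (hjm : j ≤ m) (him : i ≤ m)
    (b : G.L j) : G.sDownTo m i him (G.oneUpTo j m hjm b) = G.sDownTo j i hij b := by
  induction m, hjm using Nat.le_induction with
  | base => simp
  | succ m h ih =>
    rw [G.sDownTo_succ (by omega), G.oneUpTo_succ h, G.one_s m (by omega), ih (by omega)]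

def alphaₗ (m : ℕ) : (∀ i : Fin (m + 1), G.L i) →ₗ[K] G.L m where
  toFun := G.alphaFun m
  map_add' v w := by
    simp only [alphaFun, Pi.add_apply, G.oneUpTo_add, Finset.sum_add_distrib]
  map_smul' c v := by
    simp only [alphaFun, Pi.smul_apply, G.oneUpTo_smul, Finset.smul_sum, RingHom.id_apply]

theorem betaC_succ {m : ℕ} (a : G.L m) {i : ℕ} (hi : i ≤ m) :
    G.betaC m a (i + 1) = G.betaC m a i + G.oneUpTo i m hi (G.betaFun m a ⟨i, Nat.lt_succ_of_le hi⟩) := by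
  rw [betaC, dif_pos hi]; rfl

theorem sDownTo_sub_betaC_succ {m i : ℕ} (hm : m ≤ n) (hi : i ≤ m) (a : G.L m) :
    G.sDownTo m i hi (a - G.betaC m a (i + 1)) = 0 := by
  rw [G.betaC_succ a hi, sub_add_eq_sub_sub, G.sDownTo_sub, G.sDownTo_oneUpTo hm le_rfl,
    G.sDownTo_self, betaFun, sub_self]

theorem betaC_last {m : ℕ} (hm : m ≤ n) (a : G.L m) : G.betaC m a (m + 1) = a := by
  have h := G.sDownTo_sub_betaC_succ hm le_rfl a
  rwa [G.sDownTo_self, sub_eq_zero, eq_comm] at h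

theorem s_betaFun {m : ℕ} (hm : m ≤ n) (a : G.L m) (j : ℕ) (h : j + 1 ≤ m) :
    G.s j (G.betaFun m a ⟨j + 1, Nat.succ_lt_succ h⟩) = 0 := by
  rw [betaFun, G.s_sDownTo h (by omega), G.sDownTo_sub_betaC_succ hm]

theorem alphaFun_betaFun {m : ℕ} (hm : m ≤ n) (a : G.L m) : G.alphaFun m (G.betaFun m a) = a := by
  have h_telescope : ∀ i : Fin (m + 1), G.oneUpTo i m i.is_le (G.betaFun m a i) =
      G.betaC m a (i + 1) - G.betaC m a i := fun i => by
    rw [G.betaC_succ a i.is_le, add_sub_cancel_left]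
  rw [alphaFun, Finset.sum_congr rfl fun i _ => h_telescope i,
    Fin.sum_univ_eq_sum_range (fun i => G.betaC m a (i + 1) - G.betaC m a i),
    Finset.sum_range_sub, G.betaC_last hm, betaC, sub_zero]

theorem sDownTo_alphaFun {m : ℕ} (hm : m ≤ n) (v : ∀ i : Fin (m + 1), G.L i)
    (hv : ∀ (j : ℕ) (h : j + 1 ≤ m), G.s j (v ⟨j + 1, Nat.succ_lt_succ h⟩) = 0) (i : Fin (m + 1))
    (hvi : ∀ j < i, v j = 0) : G.sDownTo m i i.is_le (G.alphaFun m v) = v i := by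
  rw [alphaFun, G.sDownTo_sum, Finset.sum_eq_single i _ (by simp)]
  · rw [G.sDownTo_oneUpTo hm le_rfl, G.sDownTo_self]
  · intro j _ hji
    rcases lt_or_gt_of_ne hji with hlt | hgt
    · rw [hvi j hlt, G.oneUpTo_zero, G.sDownTo_zero]
    · obtain ⟨_ | j, hj⟩ := j
      · exact absurd hgt (Fin.not_lt_zero i)
      have hij : (i : ℕ) < j + 1 := hgt
      rw [G.sDownTo_oneUpTo hm (by omega), G.sDownTo_succ (by omega), hv j (by omega),
        G.sDownTo_zero]

theorem eq_zero_of_alphaFun_eq_zero {m : ℕ} (hm : m ≤ n) (v : ∀ i : Fin (m + 1), G.L i)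
    (hv : ∀ (j : ℕ) (h : j + 1 ≤ m), G.s j (v ⟨j + 1, Nat.succ_lt_succ h⟩) = 0)
    (h0 : G.alphaFun m v = 0) : v = 0 := by
  funext i
  induction i using WellFoundedLT.induction with
  | ind i ih => rw [← G.sDownTo_alphaFun hm v hv i ih, h0, G.sDownTo_zero, Pi.zero_apply]

theorem betaFun_alphaFun {m : ℕ} (hm : m ≤ n) (v : ∀ i : Fin (m + 1), G.L i)
    (hv : ∀ (j : ℕ) (h : j + 1 ≤ m), G.s j (v ⟨j + 1, Nat.succ_lt_succ h⟩) = 0) :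
    G.betaFun m (G.alphaFun m v) = v := by
  refine sub_eq_zero.mp (G.eq_zero_of_alphaFun_eq_zero hm _ (fun j h => ?_) ?_)
  · rw [Pi.sub_apply, map_sub, G.s_betaFun hm _ j h, hv j h, sub_zero]
  · change G.alphaₗ m (G.betaFun m (G.alphaFun m v) - v) = 0
    rw [map_sub, sub_eq_zero]
    exact G.alphaFun_betaFun hm _

end LinGlobId

/-- Let `L` be an n-globular K-vector space with linear identity maps,
`V_i = ker (s : L_i → L_{i-1})` (`V_0 = L_0`).  For each `m ≤ n`, the linear map
`α_m : V_0 ⊕ ⋯ ⊕ V_m → L_m`, `α_m (v_0,…,v_m) = Σᵢ 1^{m-i}_{v_i}`, is a linear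
isomorphism, and its inverse is `β_m` computed component by component (from left to
right) by `β_m(a)_i = s^{m-i}(a − Σ_{j<i} 1^{m-j}_{p_j β_m(a)})`. -/
theorem alpha_linear_isomorphism (K : Type) [Field K] (n : ℕ) (G : LinGlobId K n)
    (m : ℕ) (hm : m ≤ n) :
    (∀ v w : ∀ i : Fin (m + 1), G.L i,
        G.alphaFun m (v + w) = G.alphaFun m v + G.alphaFun m w) ∧
    (∀ (c : K) (v : ∀ i : Fin (m + 1), G.L i),
        G.alphaFun m (c • v) = c • G.alphaFun m v) ∧
    (∀ (a : G.L m) (j : ℕ) (h : j + 1 ≤ m),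
        G.s j (G.betaFun m a ⟨j + 1, by omega⟩) = 0) ∧
    (∀ a : G.L m, G.alphaFun m (G.betaFun m a) = a) ∧
    (∀ v : ∀ i : Fin (m + 1), G.L i,
        (∀ (j : ℕ) (h : j + 1 ≤ m), G.s j (v ⟨j + 1, by omega⟩) = 0) →
        G.betaFun m (G.alphaFun m v) = v) := by
  exact ⟨(G.alphaₗ m).map_add, (G.alphaₗ m).map_smul, G.s_betaFun hm, G.alphaFun_betaFun hm,
    G.betaFun_alphaFun hm⟩
end

section
/- Let L be an n-globular K-vector space, i.e. K-vector spaces L_n, …, L_0 with linear maps s, t : L_m → L_{m-1} satisfying s∘s = s∘t and t∘s = t∘t, and set V_m = ker(s : L_m → L_{m-1}) (with V_0 = L_0). Then for every m ∈ {1,…,n}, t maps V_m into V_{m-1}, and t(t(v)) = 0 for every v ∈ V_m with m ≥ 2; hence the spaces V_0,…,V_n together with the differential d_m = t|_{V_m} form an (n+1)-term chain complex of K-vector spaces. -/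
/- Both globular identities have the shape `f ∘ s = f ∘ t`, with `f` the source or target map. -/
theorem map_apply_eq_zero_of_map_comp_eq {M N P F G H : Type*} [Zero N] [Zero P]
    [FunLike F M N] [FunLike G M N] [FunLike H N P] [ZeroHomClass H N P]
    {s : F} {t : G} {f : H} (hst : ∀ a, f (s a) = f (t a)) {v : M} (hv : s v = 0) :
    f (t v) = 0 := by
  rw [← hst, hv, map_zero]

namespace LinGlob

variable {K : Type} [Field K] {n : ℕ} (G : LinGlob K n)

theorem s_t_eq_zero_of_s_eq_zero {m : ℕ} {v : G.L (m + 2)} (hv : G.s (m + 1) v = 0) :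
    G.s m (G.t (m + 1) v) = 0 :=
  map_apply_eq_zero_of_map_comp_eq (G.glob_s m) hv

theorem t_t_eq_zero_of_s_eq_zero {m : ℕ} {v : G.L (m + 2)} (hv : G.s (m + 1) v = 0) :
    G.t m (G.t (m + 1) v) = 0 :=
  map_apply_eq_zero_of_map_comp_eq (G.glob_t m) hv

end LinGlob

/-- Let `L` be an n-globular K-vector space and set
`V_m = ker (s : L_m → L_{m-1})` (with `V_0 = L_0`).  Then `t` maps `V_m` into `V_{m-1}`
(i.e. `s (t v) = 0` whenever `s v = 0`), and `t (t v) = 0` for `v ∈ V_m`, `m ≥ 2`;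
hence the spaces `V_0, …, V_n` with differential `d_m = t|_{V_m}` form an `(n+1)`-term
chain complex of K-vector spaces. -/
theorem glob_kernels_chainComplex (K : Type) [Field K] (n : ℕ) (G : LinGlob K n) :
    (∀ m (v : G.L (m + 2)), G.s (m + 1) v = 0 → G.s m (G.t (m + 1) v) = 0) ∧
    (∀ m (v : G.L (m + 2)), G.s (m + 1) v = 0 → G.t m (G.t (m + 1) v) = 0) :=
  ⟨fun _ _ => G.s_t_eq_zero_of_s_eq_zero, fun _ _ => G.t_t_eq_zero_of_s_eq_zero⟩
end

section
/- Let L be an n-globular K-vector space with linear identity maps, and identify each L_m with V_0 ⊕ ⋯ ⊕ V_m (V_i = ker s_i) via the isomorphism sending (v_0,…,v_m) to Σ_i 1^{m-i}_{v_i}; under this identification s(v_0,…,v_m) = (v_0,…,v_{m-1}), t(v_0,…,v_m) = (v_0,…,v_{m-1} + t v_m) and 1_{(v_0,…,v_m)} = (v_0,…,v_m,0). Suppose that for some 0 ≤ p < m ≤ n a linear map ∘_p, defined on the subspace of pairs (v,w) ∈ L_m × L_m with t^{m-p}(v) = s^{m-p}(w), satisfies the unit laws 1^{m-p}_{s^{m-p}(v)}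 ∘_p v = v and v ∘_p 1^{m-p}_{t^{m-p}(v)} = v. Then necessarily (v_0,…,v_m) ∘_p (w_0,…,w_m) = (v_0,…,v_p, v_{p+1}+w_{p+1}, …, v_m+w_m). In particular, an n-globular vector space with linear identities admits at most one completion by linear composition maps to a linear n-category. -/
/- The explicit model: L_m = V_0 × ⋯ × V_m with
   s(v_0,…,v_m) = (v_0,…,v_{m-1}),  t(v_0,…,v_m) = (v_0,…,v_{m-1} + d v_m),
   1_{(v_0,…,v_m)} = (v_0,…,v_m,0),
   (v ∘_p w) = (v_0,…,v_p, v_{p+1}+w_{p+1}, …, v_m+w_m). -/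

namespace GlobModel

variable {K : Type} [Field K] {V : ℕ → Type} [∀ i, AddCommGroup (V i)]
  [∀ i, Module K (V i)]

/-- The space of `m`-cells `L_m = V_0 × ⋯ × V_m`. -/
abbrev Cells (V : ℕ → Type) (m : ℕ) : Type := ∀ i : Fin (m + 1), V i

/-- Source map `s (v_0,…,v_m) = (v_0,…,v_{m-1})`. -/
def smap (m : ℕ) (v : Cells V (m + 1)) : Cells V m := fun i => v ⟨i.val, by omega⟩

/-- Target map `t (v_0,…,v_m) = (v_0,…,v_{m-1} + d v_m)`. -/
def tmap (d : ∀ i, V (i + 1) →ₗ[K] V i) (m : ℕ) (v : Cells V (m + 1)) : Cells V m :=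
  fun i =>
    Fin.lastCases (motive := fun j : Fin (m + 1) => V j)
      (v ⟨m, by omega⟩ + d m (v ⟨m + 1, by omega⟩))
      (fun j => v ⟨j.val, by omega⟩) i

/-- Identity map `1_{(v_0,…,v_m)} = (v_0,…,v_m,0)`. -/
def onemap (m : ℕ) (v : Cells V m) : Cells V (m + 1) := fun i =>
  Fin.lastCases (motive := fun j : Fin (m + 2) => V j) 0 (fun j => v ⟨j.val, by omega⟩) i

/-- Composition along a `p`-cell:
`(v ∘_p w)_i = v_i` for `i ≤ p` and `v_i + w_i` for `i > p`. -/
def compmap (p : ℕ) {m : ℕ} (v w : Cells V m) : Cells V m := fun i =>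
  if (i : ℕ) ≤ p then v i else v i + w i

/-- One application of the source map (junk identity at level 0). -/
def sstep : ∀ m, Cells V m → Cells V (m - 1)
  | 0, v => v
  | (m + 1), v => smap m v

/-- One application of the target map (junk identity at level 0). -/
def tstep (d : ∀ i, V (i + 1) →ₗ[K] V i) : ∀ m, Cells V m → Cells V (m - 1)
  | 0, v => v
  | (m + 1), v => tmap d m v

/-- Iterated source map `s^k : L_m → L_{m-k}`. -/
def sIter (m : ℕ) : ∀ k, Cells V m → Cells V (m - k)
  | 0, v => v
  | (k + 1), v => sstep (m - k) (sIter m k v)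

/-- Iterated target map `t^k : L_m → L_{m-k}`. -/
def tIter (d : ∀ i, V (i + 1) →ₗ[K] V i) (m : ℕ) : ∀ k, Cells V m → Cells V (m - k)
  | 0, v => v
  | (k + 1), v => tstep d (m - k) (tIter d m k v)

/-- Iterated identity map `1^k : L_j → L_{j+k}`. -/
def oneIter : ∀ (j k : ℕ), Cells V j → Cells V (j + k)
  | _, 0, v => v
  | j, (k + 1), v => onemap (j + k) (oneIter j k v)

/-- Cast between levels. -/
def castC {a b : ℕ} (h : a = b) (v : Cells V a) : Cells V b := h ▸ v

/-- Composability of two `m`-cells along a `p`-cell: `t^{m-p} v = s^{m-p} w`. -/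
def Composable (d : ∀ i, V (i + 1) →ₗ[K] V i) (p : ℕ) {m : ℕ}
    (v w : Cells V m) : Prop :=
  tIter d m (m - p) v = sIter m (m - p) w

end GlobModel

/-!
Let `e := 1^{m-p} t^{m-p} v`, the identity on the common `p`-cell of `v` and `w`. By the
globular identities `s^{m-p} e = t^{m-p} e = t^{m-p} v`, the pairs `(v, e)`, `(e, e)`, `(e, w)`
are composable, and the unit laws give `v ∘ e = v`, `e ∘ e = e`, `e ∘ w = w`. Additivity of
`∘` then yields the Eckmann–Hilton style identity
`v ∘ w + e = (v + e) ∘ (w + e) = (v + e) ∘ (e + w) = v ∘ e + e ∘ w = v + w`,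
so `v ∘ w = v + w - e`. In coordinates `e` agrees with `w` up to level `p` and vanishes above.
-/

open GlobModel

theorem eq_add_sub_of_map_add_of_units {M : Type*} [AddCommGroup M] (R : M → M → Prop)
    (c : M → M → M)
    (hadd : ∀ v w v' w', R v w → R v' w' → c (v + v') (w + w') = c v w + c v' w')
    {v w e : M} (hvw : R v w) (hve : R v e) (hee : R e e) (hew : R e w)
    (hv : c v e = v) (he : c e e = e) (hw : c e w = w) :
    c v w = v + w - e := by
  have key : c v w + e = v + w :=
    calc c v w + e = c (v + e) (w + e) := by rw [hadd v w e e hvw hee, he]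
      _ = c (v + e) (e + w) := by rw [add_comm w e]
      _ = v + w := by rw [hadd v e e w hve hew, hv, hw]
  rw [← key, add_sub_cancel_right]

namespace GlobModel

variable {V : ℕ → Type}

theorem castC_apply {a b : ℕ} (h : a = b) (v : Cells V a) (i : Fin (b + 1)) :
    castC h v i = v ⟨i, by omega⟩ := by
  subst h; rfl

theorem sstep_apply : ∀ (a : ℕ) (x : Cells V a) (i : Fin (a - 1 + 1)),
    sstep a x i = x ⟨i, by omega⟩
  | 0, _, _ => rfl
  | _ + 1, _, _ => rfl

theorem sIter_apply (m k : ℕ) (v : Cells V m) (i : Fin (m - k + 1)) :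
    sIter m k v i = v ⟨i, by omega⟩ := by
  induction k with
  | zero => rfl
  | succ k ih => exact (sstep_apply _ _ i).trans (ih ⟨i, by omega⟩)

variable [∀ i, AddCommGroup (V i)]

theorem onemap_apply_of_le (m : ℕ) (v : Cells V m) (i : Fin (m + 2)) (hi : (i : ℕ) ≤ m) :
    onemap m v i = v ⟨i, by omega⟩ := by
  obtain ⟨j, rfl⟩ : ∃ j : Fin (m + 1), Fin.castSucc j = i := ⟨⟨i, by omega⟩, rfl⟩
  simp [onemap]

theorem onemap_apply_last (m : ℕ) (v : Cells V m) : onemap m v (Fin.last (m + 1)) = 0 := by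
  simp [onemap]

theorem oneIter_apply_of_le (j k : ℕ) (x : Cells V j) (i : Fin (j + k + 1)) (hi : (i : ℕ) ≤ j) :
    oneIter j k x i = x ⟨i, by omega⟩ := by
  induction k with
  | zero => rfl
  | succ k ih => exact (onemap_apply_of_le (j + k) _ i (by omega)).trans (ih ⟨i, by omega⟩ hi)

theorem oneIter_apply_of_lt (j k : ℕ) (x : Cells V j) (i : Fin (j + k + 1)) (hi : j < i) :
    oneIter j k x i = 0 := by
  induction k with
  | zero => omega
  | succ k ih =>
    by_cases hlast : (i : ℕ) = j + k + 1
    · obtain rfl : i = Fin.last (j + k + 1) := Fin.ext hlast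
      exact onemap_apply_last _ _
    · exact (onemap_apply_of_le (j + k) _ i (by omega)).trans (ih ⟨i, by omega⟩ hi)

theorem sIter_castC_oneIter (m k : ℕ) (h : m - k + k = m) (x : Cells V (m - k)) :
    sIter m k (castC h (oneIter (m - k) k x)) = x := by
  funext i
  rw [sIter_apply, castC_apply, oneIter_apply_of_le _ _ _ _ (by simp; omega)]

variable {K : Type} [Field K] [∀ i, Module K (V i)]

theorem tmap_eq_smap_of_last_eq_zero (d : ∀ i, V (i + 1) →ₗ[K] V i) (m : ℕ)
    (x : Cells V (m + 1)) (hx : x (Fin.last (m + 1)) = 0) : tmap d m x = smap m x := by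
  funext i
  induction i using Fin.lastCases with
  | last => simp [tmap, smap, show x ⟨m + 1, by omega⟩ = 0 from hx]
  | cast j => simp [tmap, smap]

theorem tstep_apply_of_vanish_above (d : ∀ i, V (i + 1) →ₗ[K] V i) :
    ∀ (a : ℕ) (x : Cells V a), (∀ i : Fin (a + 1), a - 1 < i → x i = 0) →
      ∀ i : Fin (a - 1 + 1), tstep d a x i = x ⟨i, by omega⟩
  | 0, _, _, _ => rfl
  | a + 1, x, hx, i => by
    rw [tstep, tmap_eq_smap_of_last_eq_zero d a x (hx _ (by simp))]
    rfl

theorem tIter_apply_of_vanish_above (d : ∀ i, V (i + 1) →ₗ[K] V i) (m k : ℕ) (u : Cells V m)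
    (hu : ∀ i : Fin (m + 1), m - k < i → u i = 0) (i : Fin (m - k + 1)) :
    tIter d m k u i = u ⟨i, by omega⟩ := by
  induction k with
  | zero => rfl
  | succ k ih =>
    have ih' := ih (fun j hj => hu j (by omega))
    exact (tstep_apply_of_vanish_above d _ _
      (fun j hj => (ih' j).trans (hu _ (by simp only; omega))) i).trans (ih' ⟨i, by omega⟩)

theorem tIter_castC_oneIter (d : ∀ i, V (i + 1) →ₗ[K] V i) (m k : ℕ) (h : m - k + k = m)
    (x : Cells V (m - k)) : tIter d m k (castC h (oneIter (m - k) k x)) = x := by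
  funext i
  rw [tIter_apply_of_vanish_above, castC_apply, oneIter_apply_of_le _ _ _ _ (by simp; omega)]
  intro j hj
  rw [castC_apply, oneIter_apply_of_lt _ _ _ _ hj]

end GlobModel

theorem composition_is_unique (K : Type) [Field K] (V : ℕ → Type)
    [∀ i, AddCommGroup (V i)] [∀ i, Module K (V i)]
    (d : ∀ i, V (i + 1) →ₗ[K] V i)
    (p m : ℕ)
    (c : Cells V m → Cells V m → Cells V m)
    (hadd : ∀ v w v' w', Composable d p v w → Composable d p v' w' →
        c (v + v') (w + w') = c v w + c v' w')
    (hunitL : ∀ v : Cells V m,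
        c (castC (by omega : m - (m - p) + (m - p) = m)
            (oneIter (m - (m - p)) (m - p) (sIter m (m - p) v))) v = v)
    (hunitR : ∀ v : Cells V m,
        c v (castC (by omega : m - (m - p) + (m - p) = m)
            (oneIter (m - (m - p)) (m - p) (tIter d m (m - p) v))) = v) :
    ∀ v w, Composable d p v w →
      ∀ i : Fin (m + 1), c v w i = if (i : ℕ) ≤ p then v i else v i + w i := by
  intro v w hvw i
  have hts : tIter d m (m - p) v = sIter m (m - p) w := hvw
  set e := castC (by omega : m - (m - p) + (m - p) = m)
    (oneIter (m - (m - p)) (m - p) (tIter d m (m - p) v)) with he_def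
  have hse : sIter m (m - p) e = tIter d m (m - p) v := sIter_castC_oneIter ..
  have hte : tIter d m (m - p) e = tIter d m (m - p) v := tIter_castC_oneIter ..
  have hee : c e e = e := by simpa only [hte] using hunitR e
  have hew : c e w = w := by simpa only [← hts] using hunitL w
  rw [eq_add_sub_of_map_add_of_units (Composable d p) c hadd hvw hse.symm
    (hte.trans hse.symm) (hte.trans hts) (hunitR v) hee hew]
  split_ifs with hip
  · have hei : e i = w i := by
      rw [he_def, castC_apply, oneIter_apply_of_le _ _ _ _ (by simp; omega), hts, sIter_apply]
    simp [hei]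
  · have hei : e i = 0 := by
      rw [he_def, castC_apply, oneIter_apply_of_lt _ _ _ _ (by simp only; omega)]
    simp [hei]
end

section
/- Let L and L' be linear n-categories over a field K and let F_m : L_m → L'_m (0 ≤ m ≤ n) be linear maps that commute with the source maps, the target maps and the identity maps. Then F automatically commutes with all composition maps: whenever v, w ∈ L_m satisfy t^{m-p}(v) = s^{m-p}(w), also t^{m-p}(F_m v) = s^{m-p}(F_m w) and F_m(v ∘_p w) = F_m(v) ∘_p F_m(w); hence F is a linear n-functor. -/
/- STATEMENT 0: the category of linear n-categories over a field K is equivalent to the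
category of (n+1)-term chain complexes of K-vector spaces (concentrated in degrees 0,…,n). -/

open CategoryTheory

namespace LinGlob

variable {K : Type} [Field K] {n : ℕ}

/-- One application of the target map (junk identity at level 0). -/
def tStep (G : LinGlob K n) : ∀ m, G.L m → G.L (m - 1)
  | 0, a => a
  | (m + 1), a => G.t m a

/-- Iterated target map `t^k : L m → L (m-k)`. -/
def tFrom (G : LinGlob K n) (m : ℕ) : ∀ k, G.L m → G.L (m - k)
  | 0, a => a
  | (k + 1), a => G.tStep (m - k) (G.tFrom m k a)

/-- Two `m`-cells are composable along a `p`-cell if `t^{m-p} a = s^{m-p} b`. -/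
def Composable (G : LinGlob K n) (p m : ℕ) (a b : G.L m) : Prop :=
  G.tFrom m (m - p) a = G.sFrom m (m - p) b

end LinGlob

/-- A linear n-category: an n-globular vector space with identities, together with
(linear, associative, unital, interchanging) composition maps `∘ₚ` of `m`-cells along
`p`-cells, `0 ≤ p < m ≤ n`, defined on composable pairs. -/
structure LinNCat (K : Type) [Field K] (n : ℕ) extends LinGlobId K n where
  comp : ∀ (p m : ℕ), L m → L m → L m
  comp_add : ∀ p m (a a' b b' : L m),
      LinGlob.Composable toLinGlob p m a b → LinGlob.Composable toLinGlob p m a' b' →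
      comp p m (a + a') (b + b') = comp p m a b + comp p m a' b'
  comp_smul : ∀ p m (c : K) (a b : L m), LinGlob.Composable toLinGlob p m a b →
      comp p m (c • a) (c • b) = c • comp p m a b
  s_comp_top : ∀ m (a b : L (m + 1)), LinGlob.Composable toLinGlob m (m + 1) a b →
      s m (comp m (m + 1) a b) = s m a
  t_comp_top : ∀ m (a b : L (m + 1)), LinGlob.Composable toLinGlob m (m + 1) a b →
      t m (comp m (m + 1) a b) = t m b
  s_comp : ∀ p m, p < m → ∀ (a b : L (m + 1)), LinGlob.Composable toLinGlob p (m + 1) a b →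
      s m (comp p (m + 1) a b) = comp p m (s m a) (s m b)
  t_comp : ∀ p m, p < m → ∀ (a b : L (m + 1)), LinGlob.Composable toLinGlob p (m + 1) a b →
      t m (comp p (m + 1) a b) = comp p m (t m a) (t m b)
  comp_assoc : ∀ p m (a b c : L m),
      LinGlob.Composable toLinGlob p m a b → LinGlob.Composable toLinGlob p m b c →
      comp p m (comp p m a b) c = comp p m a (comp p m b c)
  id_comp' : ∀ p m, (h : p < m) → ∀ a : L m,
      comp p m (LinGlob.castL toLinGlob (by omega : m - (m - p) + (m - p) = m)
        (LinGlobId.oneUp toLinGlobId (m - (m - p)) (m - p)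
          (LinGlob.sFrom toLinGlob m (m - p) a))) a = a
  comp_id' : ∀ p m, (h : p < m) → ∀ a : L m,
      comp p m a (LinGlob.castL toLinGlob (by omega : m - (m - p) + (m - p) = m)
        (LinGlobId.oneUp toLinGlobId (m - (m - p)) (m - p)
          (LinGlob.tFrom toLinGlob m (m - p) a))) = a
  interchange : ∀ q p m, q < p → p < m → ∀ (a b c d : L m),
      LinGlob.Composable toLinGlob p m a b → LinGlob.Composable toLinGlob p m c d →
      LinGlob.Composable toLinGlob q m a c → LinGlob.Composable toLinGlob q m b d →
      comp q m (comp p m a b) (comp p m c d) = comp p m (comp q m a c) (comp q m b d)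
  one_comp : ∀ p m (a b : L m), LinGlob.Composable toLinGlob p m a b →
      one m (comp p m a b) = comp p (m + 1) (one m a) (one m b)

/-!
Composition in a linear n-category is forced by linearity. Writing `e = 1^{m-p}(t^{m-p} a)`,
the composable pair `(a, b)` is the sum of the composable pairs `(a, e)` and `(0, b - e)`;
the first composes to `a` since `e` is a right unit of `a`, and the second to `b - e` since
the left unit of `b - e` is `1^{m-p}(s^{m-p} b - t^{m-p} a) = 0`. Hence
`a ∘ₚ b = a + b - 1^{m-p}(t^{m-p} a)`, an expression in the linear structure, `t` and `1`
alone, all of which `F` preserves.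
-/

variable {K : Type} [Field K] {n : ℕ}

section IterDown

variable {V W : ℕ → Type} [∀ m, AddCommGroup (V m)] [∀ m, Module K (V m)]
  [∀ m, AddCommGroup (W m)] [∀ m, Module K (W m)]

def stepDown (f : ∀ m, V (m + 1) →ₗ[K] V m) : ∀ m, V m →ₗ[K] V (m - 1)
  | 0 => LinearMap.id
  | m + 1 => f m

def iterDown (f : ∀ m, V (m + 1) →ₗ[K] V m) (m : ℕ) : ∀ k, V m →ₗ[K] V (m - k)
  | 0 => LinearMap.id
  | k + 1 => stepDown f (m - k) ∘ₗ iterDown f m k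

theorem stepDown_congr_heq (f : ∀ m, V (m + 1) →ₗ[K] V m) {a b : ℕ} (h : a = b)
    {x : V a} {y : V b} (hxy : HEq x y) : HEq (stepDown f a x) (stepDown f b y) := by
  subst h; rw [eq_of_heq hxy]

theorem map_stepDown (F : ∀ m, V m →ₗ[K] W m) {f : ∀ m, V (m + 1) →ₗ[K] V m}
    {g : ∀ m, W (m + 1) →ₗ[K] W m} (h : ∀ m a, F m (f m a) = g m (F (m + 1) a)) :
    ∀ m a, F (m - 1) (stepDown f m a) = stepDown g m (F m a)
  | 0, _ => rfl
  | m + 1, a => h m a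

theorem map_iterDown (F : ∀ m, V m →ₗ[K] W m) {f : ∀ m, V (m + 1) →ₗ[K] V m}
    {g : ∀ m, W (m + 1) →ₗ[K] W m} (h : ∀ m a, F m (f m a) = g m (F (m + 1) a))
    (m k : ℕ) (a : V m) : F (m - k) (iterDown f m k a) = iterDown g m k (F m a) := by
  induction k with
  | zero => rfl
  | succ k ih => exact (map_stepDown F h (m - k) _).trans (congrArg _ ih)

theorem iterDown_succ_heq {f : ∀ m, V (m + 1) →ₗ[K] V m} {u : ∀ m, V m →ₗ[K] V (m + 1)}
    {m : ℕ} (hu : ∀ a, f m (u m a) = a) (k : ℕ) (z : V m) :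
    HEq (iterDown f (m + 1) (k + 1) (u m z)) (iterDown f m k z) := by
  induction k with
  | zero => exact heq_of_eq (hu z)
  | succ k ih => exact stepDown_congr_heq f (by omega) ih

end IterDown

namespace LinGlob

theorem sStep_eq_stepDown (G : LinGlob K n) : ∀ m (a : G.L m), G.sStep m a = stepDown G.s m a
  | 0, _ => rfl
  | _ + 1, _ => rfl

theorem sFrom_eq_iterDown (G : LinGlob K n) (m k : ℕ) (a : G.L m) :
    G.sFrom m k a = iterDown G.s m k a := by
  induction k with
  | zero => rfl
  | succ k ih => rw [sFrom, ih, sStep_eq_stepDown]; rfl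

theorem tStep_eq_stepDown (G : LinGlob K n) : ∀ m (a : G.L m), G.tStep m a = stepDown G.t m a
  | 0, _ => rfl
  | _ + 1, _ => rfl

theorem tFrom_eq_iterDown (G : LinGlob K n) (m k : ℕ) (a : G.L m) :
    G.tFrom m k a = iterDown G.t m k a := by
  induction k with
  | zero => rfl
  | succ k ih => rw [tFrom, ih, tStep_eq_stepDown]; rfl

theorem composable_iff (G : LinGlob K n) {p m : ℕ} {a b : G.L m} :
    G.Composable p m a b ↔ iterDown G.t m (m - p) a = iterDown G.s m (m - p) b := by
  rw [Composable, sFrom_eq_iterDown, tFrom_eq_iterDown]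

theorem castL_zero (G : LinGlob K n) {a b : ℕ} (h : a = b) : G.castL h (0 : G.L a) = 0 := by
  subst h; rfl

theorem map_castL {G G' : LinGlob K n} (F : ∀ m, G.L m →ₗ[K] G'.L m) {a b : ℕ} (h : a = b)
    (x : G.L a) : F b (G.castL h x) = G'.castL h (F a x) := by
  subst h; rfl

theorem Composable.map {G G' : LinGlob K n} (F : ∀ m, G.L m →ₗ[K] G'.L m)
    (hs : ∀ m a, F m (G.s m a) = G'.s m (F (m + 1) a))
    (ht : ∀ m a, F m (G.t m a) = G'.t m (F (m + 1) a)) {p m : ℕ} {a b : G.L m}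
    (hab : G.Composable p m a b) : G'.Composable p m (F m a) (F m b) := by
  rw [composable_iff] at hab ⊢
  rw [← map_iterDown F ht, ← map_iterDown F hs, hab]

end LinGlob

namespace LinGlobId

theorem oneUp_zero (G : LinGlobId K n) (j k : ℕ) : G.oneUp j k (0 : G.L j) = 0 := by
  induction k with
  | zero => rfl
  | succ k ih => rw [oneUp, ih, map_zero]

theorem map_oneUp {G G' : LinGlobId K n} (F : ∀ m, G.L m →ₗ[K] G'.L m)
    (hone : ∀ m a, F (m + 1) (G.one m a) = G'.one m (F m a)) (j k : ℕ) (x : G.L j) :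
    F (j + k) (G.oneUp j k x) = G'.oneUp j k (F j x) := by
  induction k with
  | zero => rfl
  | succ k ih =>
    show F (j + k + 1) (G.one (j + k) _) = G'.one (j + k) _
    rw [hone, ih]

theorem iterDown_castL_oneUp_heq (G : LinGlobId K n) {f : ∀ m, G.L (m + 1) →ₗ[K] G.L m}
    (hf : ∀ m, m < n → ∀ a, f m (G.one m a) = a) {j k m : ℕ} (h : j + k = m) (hm : m ≤ n)
    (x : G.L j) : HEq (iterDown f m k (G.castL h (G.oneUp j k x))) x := by
  subst h
  induction k with
  | zero => rfl
  | succ k ih => exact (iterDown_succ_heq (hf (j + k) (by omega)) k _).trans (ih (by omega))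

end LinGlobId

namespace LinNCat

theorem comp_eq_add_sub (C : LinNCat K n) {p m : ℕ} (hpm : p < m) {a b : C.L m}
    (hab : C.Composable p m a b) :
    C.comp p m a b = a + b - C.castL (by omega : m - (m - p) + (m - p) = m)
      (C.oneUp (m - (m - p)) (m - p) (C.tFrom m (m - p) a)) := by
  rcases lt_or_ge n m with hmn | hmn
  · exact (C.trunc m hmn).elim _ _
  set e := C.castL (by omega : m - (m - p) + (m - p) = m)
    (C.oneUp (m - (m - p)) (m - p) (C.tFrom m (m - p) a))
  have hs_e : iterDown C.s m (m - p) e = iterDown C.t m (m - p) a := by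
    rw [← LinGlob.tFrom_eq_iterDown]
    exact eq_of_heq (C.iterDown_castL_oneUp_heq C.one_s _ hmn _)
  have hab' := C.composable_iff.mp hab
  have hae : C.Composable p m a e := C.composable_iff.mpr hs_e.symm
  have hzero : C.Composable p m 0 (b - e) := by
    rw [LinGlob.composable_iff, map_zero, map_sub, hs_e, hab', sub_self]
  have hunit : C.comp p m 0 (b - e) = b - e := by
    have := C.id_comp' p m hpm (b - e)
    rwa [LinGlob.sFrom_eq_iterDown, map_sub, hs_e, hab', sub_self, LinGlobId.oneUp_zero,
      LinGlob.castL_zero] at this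
  calc C.comp p m a b = C.comp p m (a + 0) (e + (b - e)) := by rw [add_zero, add_sub_cancel]
    _ = a + (b - e) := by rw [C.comp_add p m _ _ _ _ hae hzero, C.comp_id' p m hpm a, hunit]
    _ = a + b - e := by abel

end LinNCat

/-- If `F_m : L_m → L'_m` are linear maps between the cells of two
linear n-categories commuting with the source, target and identity maps, then `F`
automatically commutes with all compositions: composable pairs are sent to composable
pairs and `F (v ∘ₚ w) = F v ∘ₚ F w`; hence `F` is a linear n-functor. -/
theorem linear_maps_respecting_glob_structure_are_functors
    (K : Type) [Field K] (n : ℕ) (A B : LinNCat K n)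
    (F : ∀ m, A.L m →ₗ[K] B.L m)
    (hs : ∀ m a, F m (A.s m a) = B.s m (F (m + 1) a))
    (ht : ∀ m a, F m (A.t m a) = B.t m (F (m + 1) a))
    (hone : ∀ m a, F (m + 1) (A.one m a) = B.one m (F m a)) :
    ∀ p m, p < m → ∀ (v w : A.L m), LinGlob.Composable A.toLinGlob p m v w →
      LinGlob.Composable B.toLinGlob p m (F m v) (F m w) ∧
        F m (A.comp p m v w) = B.comp p m (F m v) (F m w) := by
  intro p m hpm v w hvw
  have hFvw := hvw.map F hs ht
  refine ⟨hFvw, ?_⟩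
  rw [A.comp_eq_add_sub hpm hvw, B.comp_eq_add_sub hpm hFvw, map_sub, map_add,
    LinGlob.map_castL, LinGlobId.map_oneUp F hone, LinGlob.tFrom_eq_iterDown,
    LinGlob.tFrom_eq_iterDown, map_iterDown F ht]
end

section
/- Let B_m : L_m × L_m → L_m (m = 0,1,2) be a family of antisymmetric bilinear maps on the cells of G(V) commuting with the source, target and identity maps. Then B respects all compositions — i.e. B(v ∘_p v', w ∘_p w') = B(v,w) ∘_p B(v',w') for all pairs (v,v'), (w,w') of m-cells composable along a p-cell — if and only if the following hold for all f, g ∈ V_1 and a, b ∈ V_2 (viewed as cells of G(V)): B(f,g) = B(1_{t(f)}, g) = B(f, 1_{t(g)}); B(a,b) = B(1_{t(a)}, b) = B(a, 1_{t(b)}) = 0; and B(1_f, b) = B(1^2_{t(f)}, b) = 0. -/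
/- The linear 2-category G(V) associated with a 3-term chain complex
   V₂ --d₂--> V₁ --d₁--> V₀ (d₁ ∘ d₂ = 0):
   L₀ = V₀, L₁ = V₀ × V₁, L₂ = V₀ × V₁ × V₂,
   s(v₀,…,v_m) = (v₀,…,v_{m-1}), t(v₀,…,v_m) = (v₀,…,v_{m-1} + d v_m),
   1_{(v₀,…,v_m)} = (v₀,…,v_m,0),
   (v₀,…,v_m) ∘_p (w₀,…,w_m) = (v₀,…,v_p, v_{p+1}+w_{p+1}, …, v_m+w_m). -/

namespace GV

variable {K : Type} [Field K] {V0 V1 V2 : Type}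
  [AddCommGroup V0] [AddCommGroup V1] [AddCommGroup V2]
  [Module K V0] [Module K V1] [Module K V2]

variable (d1 : V1 →ₗ[K] V0) (d2 : V2 →ₗ[K] V1)

/-- Source of a 1-cell. -/
def s1 (v : V0 × V1) : V0 := v.1

/-- Target of a 1-cell. -/
def t1 (v : V0 × V1) : V0 := v.1 + d1 v.2

/-- Source of a 2-cell. -/
def s2 (v : V0 × V1 × V2) : V0 × V1 := (v.1, v.2.1)

/-- Target of a 2-cell. -/
def t2 (v : V0 × V1 × V2) : V0 × V1 := (v.1, v.2.1 + d2 v.2.2)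

/-- Identity 1-cell on a 0-cell. -/
def one0 (x : V0) : V0 × V1 := (x, 0)

/-- Identity 2-cell on a 1-cell. -/
def one1 (v : V0 × V1) : V0 × V1 × V2 := (v.1, v.2, 0)

/-- Composition of 1-cells along a 0-cell. -/
def comp01 (v w : V0 × V1) : V0 × V1 := (v.1, v.2 + w.2)

/-- Composition of 2-cells along a 0-cell. -/
def comp02 (v w : V0 × V1 × V2) : V0 × V1 × V2 := (v.1, v.2.1 + w.2.1, v.2.2 + w.2.2)

/-- Composition of 2-cells along a 1-cell. -/
def comp12 (v w : V0 × V1 × V2) : V0 × V1 × V2 := (v.1, v.2.1, v.2.2 + w.2.2)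

/-- Composability of 1-cells along a 0-cell: `t v = s w`. -/
def Comp01 (v w : V0 × V1) : Prop := t1 d1 v = s1 w

/-- Composability of 2-cells along a 0-cell: `t² v = s² w`. -/
def Comp02 (v w : V0 × V1 × V2) : Prop := t1 d1 (t2 d2 v) = s1 (s2 w)

/-- Composability of 2-cells along a 1-cell: `t v = s w`. -/
def Comp12 (v w : V0 × V1 × V2) : Prop := t2 d2 v = s2 w

end GV

open GV

/-! In `G(V)` a composition along a `p`-cell is `v ∘ w = v + w - 1(t v)`, with `1` the iterated
identity on the common `p`-cell. As `B` is biadditive and commutes with `t` and `1`, the defect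
`B(v ∘ v', w ∘ w') - B(v, w) ∘ B(v', w')` equals
`B(v - 1(t v), w' - 1(s w')) + B(v' - 1(s v'), w - 1(t w))`, whose arguments run independently
over the cells with target `0` and those with source `0`. So `B` respects `∘_p` iff it kills
`ker t_p × ker s_p` and `ker s_p × ker t_p`. For `∘₀` on 1-cells this is the first family of
conditions, for `∘₁` on 2-cells the first two conditions of the second. For `∘₀` on 2-cells,
split `(-d f, f, a) = 1_{(-d f, f)} + a` and `(0, g, b) = 1_g + b`: the identity parts are
settled by the 1-cell condition since `B(1 x, 1 y) = 1 B(x, y)`, and what remains is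
`B(a, b) = 0` together with the conditions on `B(1_f, b)`, antisymmetry taking care of the
mirrored terms. -/

namespace AddMonoidHom

variable {M N P : Type*} [AddZeroClass M] [AddZeroClass N] [AddCommGroup P]

def mk₂ (f : M → N → P) (hl : ∀ m m' n, f (m + m') n = f m n + f m' n)
    (hr : ∀ m n n', f m (n + n') = f m n + f m n') : M →+ N →+ P :=
  mk' (fun m => mk' (f m) (hr m)) fun m m' => ext (hl m m')

end AddMonoidHom

section ReflexiveGraph

variable {M N : Type*} [AddCommGroup M] [AddCommGroup N]

theorem AddMonoidHom.interchange_defect (B : M →+ M →+ M) (v v' w w' P Q : M) :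
    B (v + v' - P) (w + w' - Q) - (B v w + B v' w' - B P Q) =
      B (v - P) (w' - Q) + B (v' - P) (w - Q) := by
  simp only [map_add, map_sub, AddMonoidHom.add_apply, AddMonoidHom.sub_apply]
  abel

variable {σ τ : M →+ N} {ι : N →+ M} {B : M →+ M →+ M} {BN : N → N → N}
  {comp : M → M → M}

theorem respects_comp_iff_of_composable
    (hσB : ∀ v w, σ (B v w) = BN (σ v) (σ w)) (hτB : ∀ v w, τ (B v w) = BN (τ v) (τ w))
    (hιB : ∀ x y, B (ι x) (ι y) = ι (BN x y))
    (hcomp : ∀ v w, τ v = σ w → comp v w = v + w - ι (τ v))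
    {v v' w w' : M} (hv : τ v = σ v') (hw : τ w = σ w') :
    B (comp v v') (comp w w') = comp (B v w) (B v' w') ↔
      B (v - ι (τ v)) (w' - ι (τ w)) + B (v' - ι (τ v)) (w - ι (τ w)) = 0 := by
  have hB : τ (B v w) = σ (B v' w') := by rw [hτB, hσB, hv, hw]
  rw [hcomp _ _ hv, hcomp _ _ hw, hcomp _ _ hB, hτB, ← hιB, ← sub_eq_zero,
    B.interchange_defect]

theorem respects_comp_iff_forall_ker (hσι : ∀ x, σ (ι x) = x) (hτι : ∀ x, τ (ι x) = x)
    (hσB : ∀ v w, σ (B v w) = BN (σ v) (σ w)) (hτB : ∀ v w, τ (B v w) = BN (τ v) (τ w))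
    (hιB : ∀ x y, B (ι x) (ι y) = ι (BN x y))
    (hcomp : ∀ v w, τ v = σ w → comp v w = v + w - ι (τ v)) :
    (∀ v v' w w', τ v = σ v' → τ w = σ w' →
        B (comp v v') (comp w w') = comp (B v w) (B v' w')) ↔
      ∀ u u', σ u = 0 → σ u' = 0 →
        B (u - ι (τ u)) u' = 0 ∧ B u' (u - ι (τ u)) = 0 := by
  have hτ (u : M) : τ (u - ι (τ u)) = 0 := by rw [map_sub, hτι, sub_self]
  have hσ (u : M) : σ (u - ι (σ u)) = 0 := by rw [map_sub, hσι, sub_self]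
  -- `u ↦ u - ι (τ u)` maps `ker σ` onto `ker τ`
  have hred (v : M) : v - ι (τ v) = v - ι (σ v) - ι (τ (v - ι (σ v))) := by
    rw [map_sub τ, hτι, map_sub ι]; abel
  constructor
  · intro h u u' _ hu'
    have hu₀ : τ (u - ι (τ u)) = σ 0 := by rw [hτ, map_zero]
    have h₀u' : τ 0 = σ u' := by rw [map_zero, hu']
    have h₁ := (respects_comp_iff_of_composable hσB hτB hιB hcomp hu₀ h₀u').1
      (h _ _ _ _ hu₀ h₀u')
    have h₂ := (respects_comp_iff_of_composable hσB hτB hιB hcomp h₀u' hu₀).1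
      (h _ _ _ _ h₀u' hu₀)
    simp only [hτ, map_zero, sub_zero, add_zero, zero_add] at h₁ h₂
    exact ⟨h₁, h₂⟩
  · intro h v v' w w' hv hw
    rw [respects_comp_iff_of_composable hσB hτB hιB hcomp hv hw, hred v, hred w, hv, hw,
      (h _ _ (hσ v) (hσ w')).1, (h _ _ (hσ w) (hσ v')).2, add_zero]

end ReflexiveGraph

namespace GV

variable {K : Type} [Field K] {V0 V1 V2 : Type}
  [AddCommGroup V0] [AddCommGroup V1] [AddCommGroup V2] [Module K V1] [Module K V2]
  (d2 : V2 →ₗ[K] V1) (B1 : V0 × V1 →+ V0 × V1 →+ V0 × V1)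
  (B2 : V0 × V1 × V2 →+ V0 × V1 × V2 →+ V0 × V1 × V2)

theorem comp12_eq_add_sub (v w : V0 × V1 × V2) (h : Comp12 d2 v w) :
    comp12 v w = v + w - one1 (t2 d2 v) := by
  obtain ⟨x, f, a⟩ := v; obtain ⟨y, g, b⟩ := w
  obtain ⟨rfl, rfl⟩ : x = y ∧ f + d2 a = g := Prod.ext_iff.mp h
  ext <;> simp [comp12, one1, t2]

theorem respects_comp12_iff_forall_ker (hs2 : ∀ v w, s2 (B2 v w) = B1 (s2 v) (s2 w))
    (ht2 : ∀ v w, t2 d2 (B2 v w) = B1 (t2 d2 v) (t2 d2 w))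
    (hone1 : ∀ v w, B2 (one1 v) (one1 w) = one1 (B1 v w)) :
    (∀ v v' w w', Comp12 d2 v v' → Comp12 d2 w w' →
        B2 (comp12 v v') (comp12 w w') = comp12 (B2 v w) (B2 v' w')) ↔
      ∀ a b : V2, B2 ((0, 0, a) - one1 (t2 d2 (0, 0, a))) (0, 0, b) = 0 ∧
        B2 (0, 0, b) ((0, 0, a) - one1 (t2 d2 (0, 0, a))) = 0 := by
  refine (respects_comp_iff_forall_ker (σ := .mk' s2 fun _ _ => rfl)
    (τ := .mk' (t2 d2) fun _ _ => by
      ext <;> simp only [t2, Prod.fst_add, Prod.snd_add, map_add]; abel)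
    (ι := .mk' one1 fun _ _ => by ext <;> simp [one1]) (B := B2)
    (BN := fun x y => B1 x y) (fun _ => rfl) (fun x => show (x.1, x.2 + d2 0) = x by simp)
    hs2 ht2 hone1 (comp12_eq_add_sub d2)).trans ?_
  change (∀ u u' : V0 × V1 × V2, (u.1, u.2.1) = 0 → (u'.1, u'.2.1) = 0 →
    B2 (u - one1 (t2 d2 u)) u' = 0 ∧ B2 u' (u - one1 (t2 d2 u)) = 0) ↔ _
  refine ⟨fun h a b => h _ _ rfl rfl, ?_⟩
  rintro h ⟨x, f, a⟩ ⟨y, g, b⟩ hu hu'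
  obtain ⟨rfl, rfl⟩ := Prod.mk_eq_zero.mp hu
  obtain ⟨rfl, rfl⟩ := Prod.mk_eq_zero.mp hu'
  exact h a b

theorem conditions12_iff_forall_ker :
    (∀ a b : V2, B2 (0, 0, a) (0, 0, b) = B2 (one1 (t2 d2 (0, 0, a))) (0, 0, b) ∧
        B2 (0, 0, a) (0, 0, b) = B2 (0, 0, a) (one1 (t2 d2 (0, 0, b))) ∧
        B2 (0, 0, a) (0, 0, b) = 0) ↔
      (∀ a b : V2, B2 ((0, 0, a) - one1 (t2 d2 (0, 0, a))) (0, 0, b) = 0 ∧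
        B2 (0, 0, b) ((0, 0, a) - one1 (t2 d2 (0, 0, a))) = 0) ∧
      ∀ a b : V2, B2 (0, 0, a) (0, 0, b) = 0 := by
  simp only [map_sub, AddMonoidHom.sub_apply, sub_eq_zero, forall_and, ← and_assoc]
  exact and_congr_left' (and_congr Iff.rfl forall_comm)

variable [Module K V0] (d1 : V1 →ₗ[K] V0) (B0 : V0 → V0 → V0)

theorem comp01_eq_add_sub (v w : V0 × V1) (h : Comp01 d1 v w) :
    comp01 v w = v + w - one0 (t1 d1 v) := by
  obtain ⟨x, f⟩ := v; obtain ⟨y, g⟩ := w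
  obtain rfl : x + d1 f = y := h
  ext <;> simp [comp01, one0, t1]

theorem comp02_eq_add_sub (v w : V0 × V1 × V2) (h : Comp02 d1 d2 v w) :
    comp02 v w = v + w - one1 (one0 (t1 d1 (t2 d2 v))) := by
  obtain ⟨x, f, a⟩ := v; obtain ⟨y, g, b⟩ := w
  obtain rfl : x + d1 (f + d2 a) = y := h
  ext <;> simp [comp02, one1, one0, t1, t2]

theorem respects_comp01_iff_forall_ker (hs1 : ∀ v w, s1 (B1 v w) = B0 (s1 v) (s1 w))
    (ht1 : ∀ v w, t1 d1 (B1 v w) = B0 (t1 d1 v) (t1 d1 w))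
    (hone0 : ∀ x y, B1 (one0 x) (one0 y) = one0 (B0 x y)) :
    (∀ v v' w w', Comp01 d1 v v' → Comp01 d1 w w' →
        B1 (comp01 v v') (comp01 w w') = comp01 (B1 v w) (B1 v' w')) ↔
      ∀ f g : V1, B1 ((0, f) - one0 (t1 d1 (0, f))) (0, g) = 0 ∧
        B1 (0, g) ((0, f) - one0 (t1 d1 (0, f))) = 0 := by
  refine (respects_comp_iff_forall_ker (σ := .mk' s1 fun _ _ => rfl)
    (τ := .mk' (t1 d1) fun _ _ => by
      simp only [t1, Prod.fst_add, Prod.snd_add, map_add]; abel)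
    (ι := .mk' one0 fun _ _ => by simp [one0]) (B := B1)
    (fun _ => rfl) (fun x => show x + d1 0 = x by simp) hs1 ht1 hone0
    (comp01_eq_add_sub d1)).trans ?_
  change (∀ u u' : V0 × V1, u.1 = 0 → u'.1 = 0 →
    B1 (u - one0 (t1 d1 u)) u' = 0 ∧ B1 u' (u - one0 (t1 d1 u)) = 0) ↔ _
  refine ⟨fun h f g => h _ _ rfl rfl, ?_⟩
  rintro h ⟨x, f⟩ ⟨y, g⟩ (rfl : x = 0) (rfl : y = 0)
  exact h f g

theorem conditions01_iff_forall_ker :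
    (∀ f g : V1, B1 (0, f) (0, g) = B1 (one0 (t1 d1 (0, f))) (0, g) ∧
        B1 (0, f) (0, g) = B1 (0, f) (one0 (t1 d1 (0, g)))) ↔
      ∀ f g : V1, B1 ((0, f) - one0 (t1 d1 (0, f))) (0, g) = 0 ∧
        B1 (0, g) ((0, f) - one0 (t1 d1 (0, f))) = 0 := by
  simp only [map_sub, AddMonoidHom.sub_apply, sub_eq_zero, forall_and]
  exact and_congr Iff.rfl forall_comm

theorem respects_comp02_iff_forall_ker (hs1 : ∀ v w, s1 (B1 v w) = B0 (s1 v) (s1 w))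
    (ht1 : ∀ v w, t1 d1 (B1 v w) = B0 (t1 d1 v) (t1 d1 w))
    (hs2 : ∀ v w, s2 (B2 v w) = B1 (s2 v) (s2 w))
    (ht2 : ∀ v w, t2 d2 (B2 v w) = B1 (t2 d2 v) (t2 d2 w))
    (hone0 : ∀ x y, B1 (one0 x) (one0 y) = one0 (B0 x y))
    (hone1 : ∀ v w, B2 (one1 v) (one1 w) = one1 (B1 v w)) :
    (∀ v v' w w', Comp02 d1 d2 v v' → Comp02 d1 d2 w w' →
        B2 (comp02 v v') (comp02 w w') = comp02 (B2 v w) (B2 v' w')) ↔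
      ∀ (f : V1) (a : V2) (g : V1) (b : V2),
        B2 ((0, f, a) - one1 (one0 (t1 d1 (t2 d2 (0, f, a))))) (0, g, b) = 0 ∧
        B2 (0, g, b) ((0, f, a) - one1 (one0 (t1 d1 (t2 d2 (0, f, a))))) = 0 := by
  refine (respects_comp_iff_forall_ker (σ := .mk' (fun v => s1 (s2 v)) fun _ _ => rfl)
    (τ := .mk' (fun v => t1 d1 (t2 d2 v)) fun _ _ => by
      simp only [t1, t2, Prod.fst_add, Prod.snd_add, map_add]; abel)
    (ι := .mk' (fun x => one1 (one0 x)) fun _ _ => by ext <;> simp [one1, one0]) (B := B2)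
    (BN := B0) (fun _ => rfl) (fun x => show x + d1 (0 + d2 0) = x by simp)
    (fun v w => (congrArg s1 (hs2 v w)).trans (hs1 _ _))
    (fun v w => (congrArg (t1 d1) (ht2 v w)).trans (ht1 _ _))
    (fun x y => (hone1 _ _).trans (congrArg one1 (hone0 x y)))
    (comp02_eq_add_sub d2 d1)).trans ?_
  change (∀ u u' : V0 × V1 × V2, u.1 = 0 → u'.1 = 0 →
    B2 (u - one1 (one0 (t1 d1 (t2 d2 u)))) u' = 0 ∧
      B2 u' (u - one1 (one0 (t1 d1 (t2 d2 u)))) = 0) ↔ _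
  refine ⟨fun h f a g b => h _ _ rfl rfl, ?_⟩
  rintro h ⟨x, f, a⟩ ⟨y, g, b⟩ (rfl : x = 0) (rfl : y = 0)
  exact h f a g b

theorem forall_ker02_iff (hdd : ∀ a, d1 (d2 a) = 0) (hB2an : ∀ v w, B2 v w = -B2 w v)
    (hone1 : ∀ v w, B2 (one1 v) (one1 w) = one1 (B1 v w))
    (h01 : ∀ f g : V1, B1 ((0, f) - one0 (t1 d1 (0, f))) (0, g) = 0 ∧
        B1 (0, g) ((0, f) - one0 (t1 d1 (0, f))) = 0) :
    (∀ (f : V1) (a : V2) (g : V1) (b : V2),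
        B2 ((0, f, a) - one1 (one0 (t1 d1 (t2 d2 (0, f, a))))) (0, g, b) = 0 ∧
        B2 (0, g, b) ((0, f, a) - one1 (one0 (t1 d1 (t2 d2 (0, f, a))))) = 0) ↔
      (∀ a b : V2, B2 (0, 0, a) (0, 0, b) = 0) ∧
      ∀ (f : V1) (b : V2), B2 (one1 (0, f)) (0, 0, b) =
          B2 (one1 (one0 (t1 d1 (0, f)))) (0, 0, b) ∧
        B2 (one1 (0, f)) (0, 0, b) = 0 := by
  set X : V1 → V0 × V1 × V2 := fun f => one1 ((0, f) - one0 (t1 d1 (0, f)))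
  have hX0 : X 0 = 0 := by ext <;> simp [X, one1, one0, t1]
  have hcell (f : V1) (a : V2) :
      (0, f, a) - one1 (one0 (t1 d1 (t2 d2 (0, f, a)))) = X f + (0, 0, a) := by
    ext <;> simp [X, one1, one0, t1, t2, hdd]
  have hcell' (g : V1) (b : V2) : ((0, g, b) : V0 × V1 × V2) = one1 (0, g) + (0, 0, b) := by
    ext <;> simp [one1]
  have hXY (f g : V1) : B2 (X f) (one1 (0, g)) = 0 := by
    simp only [X, hone1, (h01 f g).1]; rfl
  have hYX (f g : V1) : B2 (one1 (0, g)) (X f) = 0 := by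
    simp only [X, hone1, (h01 f g).2]; rfl
  have expand (f : V1) (a : V2) (g : V1) (b : V2) :
      B2 ((0, f, a) - one1 (one0 (t1 d1 (t2 d2 (0, f, a))))) (0, g, b) =
        B2 (X f) (0, 0, b) + B2 (0, 0, a) (one1 (0, g)) + B2 (0, 0, a) (0, 0, b) := by
    rw [hcell, hcell' g b]
    simp only [map_add, AddMonoidHom.add_apply, hXY, zero_add]
    abel
  have expand' (f : V1) (a : V2) (g : V1) (b : V2) :
      B2 (0, g, b) ((0, f, a) - one1 (one0 (t1 d1 (t2 d2 (0, f, a))))) =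
        B2 (one1 (0, g)) (0, 0, a) + B2 (0, 0, b) (X f) + B2 (0, 0, b) (0, 0, a) := by
    rw [hcell, hcell' g b]
    simp only [map_add, AddMonoidHom.add_apply, hYX, zero_add]
    abel
  have hshift (f : V1) (b : V2) : B2 (one1 (0, f)) (0, 0, b) =
      B2 (one1 (one0 (t1 d1 (0, f)))) (0, 0, b) ↔ B2 (X f) (0, 0, b) = 0 := by
    have hXf : X f = one1 (0, f) - one1 (one0 (t1 d1 (0, f))) := by ext <;> simp [X, one1]
    rw [hXf, map_sub, AddMonoidHom.sub_apply, sub_eq_zero]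
  simp only [expand, expand', hshift]
  constructor
  · intro h
    refine ⟨fun a b => ?_, fun f b => ⟨?_, ?_⟩⟩
    · simpa [hX0, one1, Prod.mk_zero_zero] using (h 0 a 0 b).1
    · simpa [one1, Prod.mk_zero_zero] using (h f 0 0 b).1
    · simpa [hX0, Prod.mk_zero_zero] using (h 0 b f 0).2
  · rintro ⟨hAA, hC⟩ f a g b
    rw [hB2an (0, 0, a) (one1 (0, g)), hB2an (0, 0, b) (X f), (hC f b).1, (hC g a).2, hAA, hAA]
    simp

end GV

theorem bracket_respects_compositions_iff_general (K : Type) [Field K]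
    (V0 V1 V2 : Type) [AddCommGroup V0] [AddCommGroup V1] [AddCommGroup V2]
    [Module K V0] [Module K V1] [Module K V2]
    (d1 : V1 →ₗ[K] V0) (d2 : V2 →ₗ[K] V1) (hdd : ∀ a, d1 (d2 a) = 0)
    (B0 : V0 → V0 → V0) (B1 : V0 × V1 → V0 × V1 → V0 × V1)
    (B2 : V0 × V1 × V2 → V0 × V1 × V2 → V0 × V1 × V2)
    -- bilinearity
    (hB1al : ∀ v v' w, B1 (v + v') w = B1 v w + B1 v' w)
    (hB1ar : ∀ v w w', B1 v (w + w') = B1 v w + B1 v w')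
    (hB2al : ∀ v v' w, B2 (v + v') w = B2 v w + B2 v' w)
    (hB2ar : ∀ v w w', B2 v (w + w') = B2 v w + B2 v w')
    -- antisymmetry
    (hB2an : ∀ v w, B2 v w = -B2 w v)
    -- compatibility with sources, targets and identities
    (hs1 : ∀ v w, s1 (B1 v w) = B0 (s1 v) (s1 w))
    (ht1 : ∀ v w, t1 d1 (B1 v w) = B0 (t1 d1 v) (t1 d1 w))
    (hs2 : ∀ v w, s2 (B2 v w) = B1 (s2 v) (s2 w))
    (ht2 : ∀ v w, t2 d2 (B2 v w) = B1 (t2 d2 v) (t2 d2 w))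
    (hone0 : ∀ x y, B1 (one0 x) (one0 y) = one0 (B0 x y))
    (hone1 : ∀ v w, B2 (one1 v) (one1 w) = one1 (B1 v w)) :
    -- B respects all compositions
    ((∀ v v' w w', Comp01 d1 v v' → Comp01 d1 w w' →
        B1 (comp01 v v') (comp01 w w') = comp01 (B1 v w) (B1 v' w')) ∧
     (∀ v v' w w', Comp02 d1 d2 v v' → Comp02 d1 d2 w w' →
        B2 (comp02 v v') (comp02 w w') = comp02 (B2 v w) (B2 v' w')) ∧
     (∀ v v' w w', Comp12 d2 v v' → Comp12 d2 w w' →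
        B2 (comp12 v v') (comp12 w w') = comp12 (B2 v w) (B2 v' w')))
    ↔
    ((∀ f g : V1, B1 (0, f) (0, g) = B1 (one0 (t1 d1 (0, f))) (0, g) ∧
        B1 (0, f) (0, g) = B1 (0, f) (one0 (t1 d1 (0, g)))) ∧
     (∀ a b : V2, B2 (0, 0, a) (0, 0, b) = B2 (one1 (t2 d2 (0, 0, a))) (0, 0, b) ∧
        B2 (0, 0, a) (0, 0, b) = B2 (0, 0, a) (one1 (t2 d2 (0, 0, b))) ∧
        B2 (0, 0, a) (0, 0, b) = 0) ∧
     (∀ (f : V1) (b : V2), B2 (one1 (0, f)) (0, 0, b) =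
          B2 (one1 (one0 (t1 d1 (0, f)))) (0, 0, b) ∧
        B2 (one1 (0, f)) (0, 0, b) = 0)) := by
  obtain ⟨B1, rfl⟩ : ∃ β : V0 × V1 →+ V0 × V1 →+ V0 × V1, (fun v w => β v w) = B1 :=
    ⟨.mk₂ B1 hB1al hB1ar, rfl⟩
  obtain ⟨B2, rfl⟩ : ∃ β : V0 × V1 × V2 →+ V0 × V1 × V2 →+ V0 × V1 × V2,
      (fun v w => β v w) = B2 := ⟨.mk₂ B2 hB2al hB2ar, rfl⟩
  beta_reduce at *
  rw [respects_comp01_iff_forall_ker B1 d1 B0 hs1 ht1 hone0,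
    respects_comp02_iff_forall_ker d2 B1 B2 d1 B0 hs1 ht1 hs2 ht2 hone0 hone1,
    respects_comp12_iff_forall_ker d2 B1 B2 hs2 ht2 hone1,
    conditions01_iff_forall_ker, conditions12_iff_forall_ker]
  constructor
  · rintro ⟨h01, h02, h12⟩
    obtain ⟨hAA, hC⟩ := (forall_ker02_iff d2 B1 B2 d1 hdd hB2an hone1 h01).1 h02
    exact ⟨h01, ⟨h12, hAA⟩, hC⟩
  · rintro ⟨h01, ⟨h12, hAA⟩, hC⟩
    exact ⟨h01, (forall_ker02_iff d2 B1 B2 d1 hdd hB2an hone1 h01).2 ⟨hAA, hC⟩, h12⟩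

/-- Let `B_m : L_m × L_m → L_m` (m = 0,1,2) be antisymmetric bilinear
maps on the cells of `G(V)` commuting with source, target and identity maps.  Then `B`
respects all compositions iff, for all `f, g ∈ V₁` and `a, b ∈ V₂` (viewed as cells):
`B(f,g) = B(1_{t f}, g) = B(f, 1_{t g})`;
`B(a,b) = B(1_{t a}, b) = B(a, 1_{t b}) = 0`;  and
`B(1_f, b) = B(1²_{t f}, b) = 0`. -/
theorem bracket_respects_compositions_iff (K : Type) [Field K]
    (V0 V1 V2 : Type) [AddCommGroup V0] [AddCommGroup V1] [AddCommGroup V2]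
    [Module K V0] [Module K V1] [Module K V2]
    (d1 : V1 →ₗ[K] V0) (d2 : V2 →ₗ[K] V1) (hdd : ∀ a, d1 (d2 a) = 0)
    (B0 : V0 → V0 → V0) (B1 : V0 × V1 → V0 × V1 → V0 × V1)
    (B2 : V0 × V1 × V2 → V0 × V1 × V2 → V0 × V1 × V2)
    -- bilinearity
    (hB0al : ∀ x x' y, B0 (x + x') y = B0 x y + B0 x' y)
    (hB0ar : ∀ x y y', B0 x (y + y') = B0 x y + B0 x y')
    (hB0sl : ∀ (c : K) x y, B0 (c • x) y = c • B0 x y)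
    (hB0sr : ∀ (c : K) x y, B0 x (c • y) = c • B0 x y)
    (hB1al : ∀ v v' w, B1 (v + v') w = B1 v w + B1 v' w)
    (hB1ar : ∀ v w w', B1 v (w + w') = B1 v w + B1 v w')
    (hB1sl : ∀ (c : K) v w, B1 (c • v) w = c • B1 v w)
    (hB1sr : ∀ (c : K) v w, B1 v (c • w) = c • B1 v w)
    (hB2al : ∀ v v' w, B2 (v + v') w = B2 v w + B2 v' w)
    (hB2ar : ∀ v w w', B2 v (w + w') = B2 v w + B2 v w')
    (hB2sl : ∀ (c : K) v w, B2 (c • v) w = c • B2 v w)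
    (hB2sr : ∀ (c : K) v w, B2 v (c • w) = c • B2 v w)
    -- antisymmetry
    (hB0an : ∀ x y, B0 x y = -B0 y x)
    (hB1an : ∀ v w, B1 v w = -B1 w v)
    (hB2an : ∀ v w, B2 v w = -B2 w v)
    -- compatibility with sources, targets and identities
    (hs1 : ∀ v w, s1 (B1 v w) = B0 (s1 v) (s1 w))
    (ht1 : ∀ v w, t1 d1 (B1 v w) = B0 (t1 d1 v) (t1 d1 w))
    (hs2 : ∀ v w, s2 (B2 v w) = B1 (s2 v) (s2 w))
    (ht2 : ∀ v w, t2 d2 (B2 v w) = B1 (t2 d2 v) (t2 d2 w))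
    (hone0 : ∀ x y, B1 (one0 x) (one0 y) = one0 (B0 x y))
    (hone1 : ∀ v w, B2 (one1 v) (one1 w) = one1 (B1 v w)) :
    -- B respects all compositions
    ((∀ v v' w w', Comp01 d1 v v' → Comp01 d1 w w' →
        B1 (comp01 v v') (comp01 w w') = comp01 (B1 v w) (B1 v' w')) ∧
     (∀ v v' w w', Comp02 d1 d2 v v' → Comp02 d1 d2 w w' →
        B2 (comp02 v v') (comp02 w w') = comp02 (B2 v w) (B2 v' w')) ∧
     (∀ v v' w w', Comp12 d2 v v' → Comp12 d2 w w' →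
        B2 (comp12 v v') (comp12 w w') = comp12 (B2 v w) (B2 v' w')))
    ↔
    ((∀ f g : V1, B1 (0, f) (0, g) = B1 (one0 (t1 d1 (0, f))) (0, g) ∧
        B1 (0, f) (0, g) = B1 (0, f) (one0 (t1 d1 (0, g)))) ∧
     (∀ a b : V2, B2 (0, 0, a) (0, 0, b) = B2 (one1 (t2 d2 (0, 0, a))) (0, 0, b) ∧
        B2 (0, 0, a) (0, 0, b) = B2 (0, 0, a) (one1 (t2 d2 (0, 0, b))) ∧
        B2 (0, 0, a) (0, 0, b) = 0) ∧
     (∀ (f : V1) (b : V2), B2 (one1 (0, f)) (0, 0, b) =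
          B2 (one1 (one0 (t1 d1 (0, f)))) (0, 0, b) ∧
        B2 (one1 (0, f)) (0, 0, b) = 0)) :=
  bracket_respects_compositions_iff_general K V0 V1 V2 d1 d2 hdd B0 B1 B2 hB1al hB1ar hB2al hB2ar
    hB2an hs1 ht1 hs2 ht2 hone0 hone1
end

section
/- There is a bijective correspondence between antisymmetric bilinear 2-functors [−,−] : G(V) × G(V) → G(V) and graded antisymmetric chain maps ℓ_2 of weight 0 on V vanishing on V_1 × V_1. The correspondence sends ℓ_2 to the bracket defined on 2-cells by [(x,f,a),(y,g,b)] = (ℓ_2(x,y), ℓ_2(x,g) + ℓ_2(f, y + d g), ℓ_2(x,b) + ℓ_2(a,y)) (and by the analogous truncated formulas on 1- and 0-cells); its inverse sends a bracket [−,−] to the map ℓ_2 with ℓ_2(x,y) = [x,y], ℓ_2(x,g) = [1_x, g], ℓ_2(x,b) = [1^2_x, b] and ℓ_2 = 0 on V_1 × V_1, for x,y ∈ V_0, g ∈ V_1, b ∈ V_2. -/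
namespace GV

/-- A graded antisymmetric chain map `ℓ₂` of weight 0 on `V = (V₀,V₁,V₂)` which
vanishes on `V₁ × V₁`. -/
structure Ell2 (K : Type) [Field K] (V0 V1 V2 : Type)
    [AddCommGroup V0] [AddCommGroup V1] [AddCommGroup V2]
    [Module K V0] [Module K V1] [Module K V2]
    (d1 : V1 →ₗ[K] V0) (d2 : V2 →ₗ[K] V1) : Type where
  l00 : V0 → V0 → V0
  l01 : V0 → V1 → V1
  l10 : V1 → V0 → V1
  l02 : V0 → V2 → V2
  l20 : V2 → V0 → V2
  l11 : V1 → V1 → V2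
  bil00 : (∀ x, IsLinearMap K (l00 x)) ∧ (∀ y, IsLinearMap K (fun x => l00 x y))
  bil01 : (∀ x, IsLinearMap K (l01 x)) ∧ (∀ g, IsLinearMap K (fun x => l01 x g))
  bil10 : (∀ f, IsLinearMap K (l10 f)) ∧ (∀ y, IsLinearMap K (fun f => l10 f y))
  bil02 : (∀ x, IsLinearMap K (l02 x)) ∧ (∀ b, IsLinearMap K (fun x => l02 x b))
  bil20 : (∀ a, IsLinearMap K (l20 a)) ∧ (∀ y, IsLinearMap K (fun a => l20 a y))
  bil11 : (∀ f, IsLinearMap K (l11 f)) ∧ (∀ g, IsLinearMap K (fun f => l11 f g))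
  anti00 : ∀ x y, l00 x y = -l00 y x
  anti10 : ∀ f y, l10 f y = -l01 y f
  anti20 : ∀ a y, l20 a y = -l02 y a
  anti11 : ∀ f g, l11 f g = l11 g f
  chain01 : ∀ x g, d1 (l01 x g) = l00 x (d1 g)
  chain10 : ∀ f y, d1 (l10 f y) = l00 (d1 f) y
  chain02 : ∀ x b, d2 (l02 x b) = l01 x (d2 b)
  chain20 : ∀ a y, d2 (l20 a y) = l10 (d2 a) y
  chain11 : ∀ f g, d2 (l11 f g) = l01 (d1 f) g - l10 f (d1 g)
  chain12 : ∀ f b, (0 : V2) = l02 (d1 f) b - l11 f (d2 b)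
  vanish11 : ∀ f g, l11 f g = 0

/-- An antisymmetric bilinear 2-functor `[−,−] : G(V) × G(V) → G(V)`. -/
structure Bracket (K : Type) [Field K] (V0 V1 V2 : Type)
    [AddCommGroup V0] [AddCommGroup V1] [AddCommGroup V2]
    [Module K V0] [Module K V1] [Module K V2]
    (d1 : V1 →ₗ[K] V0) (d2 : V2 →ₗ[K] V1) : Type where
  B0 : V0 → V0 → V0
  B1 : V0 × V1 → V0 × V1 → V0 × V1
  B2 : V0 × V1 × V2 → V0 × V1 × V2 → V0 × V1 × V2
  bil0 : (∀ x, IsLinearMap K (B0 x)) ∧ (∀ y, IsLinearMap K (fun x => B0 x y))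
  bil1 : (∀ v, IsLinearMap K (B1 v)) ∧ (∀ w, IsLinearMap K (fun v => B1 v w))
  bil2 : (∀ v, IsLinearMap K (B2 v)) ∧ (∀ w, IsLinearMap K (fun v => B2 v w))
  anti0 : ∀ x y, B0 x y = -B0 y x
  anti1 : ∀ v w, B1 v w = -B1 w v
  anti2 : ∀ v w, B2 v w = -B2 w v
  maps_s1 : ∀ v w, s1 (B1 v w) = B0 (s1 v) (s1 w)
  maps_t1 : ∀ v w, t1 d1 (B1 v w) = B0 (t1 d1 v) (t1 d1 w)
  maps_s2 : ∀ v w, s2 (B2 v w) = B1 (s2 v) (s2 w)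
  maps_t2 : ∀ v w, t2 d2 (B2 v w) = B1 (t2 d2 v) (t2 d2 w)
  maps_one0 : ∀ x y, B1 (one0 x) (one0 y) = one0 (B0 x y)
  maps_one1 : ∀ v w, B2 (one1 v) (one1 w) = one1 (B1 v w)
  maps_comp01 : ∀ v v' w w', Comp01 d1 v v' → Comp01 d1 w w' →
      B1 (comp01 v v') (comp01 w w') = comp01 (B1 v w) (B1 v' w')
  maps_comp02 : ∀ v v' w w', Comp02 d1 d2 v v' → Comp02 d1 d2 w w' →
      B2 (comp02 v v') (comp02 w w') = comp02 (B2 v w) (B2 v' w')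
  maps_comp12 : ∀ v v' w w', Comp12 d2 v v' → Comp12 d2 w w' →
      B2 (comp12 v v') (comp12 w w') = comp12 (B2 v w) (B2 v' w')

end GV

/-!
By bilinearity and the splitting `(x, f, a) = (x, 0, 0) + (0, f, 0) + (0, 0, a)` of cells, a
bracket is determined by its values on pure cells. Brackets of identity cells are identities,
and the interchange law for `∘₀`, applied to factorizations such as
`(0, f) = (0, f) ∘₀ (d f, 0)` and `0 = (0, g, 0) ∘₀ (d g, -g, 0)`, gives `[f, g] = [1_{d f}, g]`
and kills `[f, b]`, `[a, g]`, `[a, b]` and the top component of `[1²_{d f}, b]`. What is left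
is `ℓ₂(x, y)`, `ℓ₂(x, g)`, `ℓ₂(x, b)` and their antisymmetric partners, and the source and
target axioms become the chain-map identities. Conversely, for `ℓ₂` vanishing on `V₁ × V₁` the
chain-map identities say `ℓ₂(d f, g) = ℓ₂(f, d g)` and `ℓ₂(d f, b) = 0`, which is what the
interchange law for the explicit bracket needs.
-/

namespace GV

section Bilinear

variable {K : Type} [Field K] {A B C A' B' C' : Type}
  [AddCommGroup A] [AddCommGroup B] [AddCommGroup C]
  [AddCommGroup A'] [AddCommGroup B'] [AddCommGroup C']
  [Module K A] [Module K B] [Module K C] [Module K A'] [Module K B'] [Module K C']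

variable (K) in
def IsBilinear (l : A → B → C) : Prop :=
  (∀ x, IsLinearMap K (l x)) ∧ ∀ y, IsLinearMap K fun x => l x y

namespace IsBilinear

variable {l m : A → B → C}

theorem map_add_left (h : IsBilinear K l) (x x' : A) (y : B) :
    l (x + x') y = l x y + l x' y :=
  (h.2 y).map_add x x'

theorem map_add_right (h : IsBilinear K l) (x : A) (y y' : B) :
    l x (y + y') = l x y + l x y' :=
  (h.1 x).map_add y y'

theorem map_zero_left (h : IsBilinear K l) (y : B) : l 0 y = 0 :=
  (h.2 y).map_zero

theorem map_zero_right (h : IsBilinear K l) (x : A) : l x 0 = 0 :=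
  (h.1 x).map_zero

theorem zero : IsBilinear K fun (_ : A) (_ : B) => (0 : C) :=
  ⟨fun _ => ⟨fun _ _ => (add_zero 0).symm, fun _ _ => (smul_zero _).symm⟩,
    fun _ => ⟨fun _ _ => (add_zero 0).symm, fun _ _ => (smul_zero _).symm⟩⟩

theorem add (hl : IsBilinear K l) (hm : IsBilinear K m) :
    IsBilinear K fun x y => l x y + m x y :=
  ⟨fun x => ⟨fun y y' => by simp only [(hl.1 x).map_add, (hm.1 x).map_add]; abel,
      fun c y => by simp only [(hl.1 x).map_smul, (hm.1 x).map_smul, smul_add]⟩,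
    fun y => ⟨fun x x' => by simp only [(hl.2 y).map_add, (hm.2 y).map_add]; abel,
      fun c x => by simp only [(hl.2 y).map_smul, (hm.2 y).map_smul, smul_add]⟩⟩

theorem prod {D : Type} [AddCommGroup D] [Module K D] {n : A → B → D}
    (hl : IsBilinear K l) (hn : IsBilinear K n) :
    IsBilinear K fun x y => (l x y, n x y) :=
  ⟨fun x => ⟨fun y y' => by simp only [(hl.1 x).map_add, (hn.1 x).map_add, Prod.mk_add_mk],
      fun c y => by simp only [(hl.1 x).map_smul, (hn.1 x).map_smul, Prod.smul_mk]⟩,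
    fun y => ⟨fun x x' => by simp only [(hl.2 y).map_add, (hn.2 y).map_add, Prod.mk_add_mk],
      fun c x => by simp only [(hl.2 y).map_smul, (hn.2 y).map_smul, Prod.smul_mk]⟩⟩

theorem flip (h : IsBilinear K l) : IsBilinear K fun y x => l x y :=
  ⟨h.2, h.1⟩

theorem comp (h : IsBilinear K l) (f : A' →ₗ[K] A) (g : B' →ₗ[K] B) (p : C →ₗ[K] C') :
    IsBilinear K fun x y => p (l (f x) (g y)) :=
  ⟨fun x => ⟨fun y y' => by simp only [map_add, (h.1 (f x)).map_add],
      fun c y => by simp only [map_smul, (h.1 (f x)).map_smul]⟩,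
    fun y => ⟨fun x x' => by simp only [map_add, (h.2 (g y)).map_add],
      fun c x => by simp only [map_smul, (h.2 (g y)).map_smul]⟩⟩

end IsBilinear

end Bilinear

variable {K : Type} [Field K] {V0 V1 V2 : Type}
  [AddCommGroup V0] [AddCommGroup V1] [AddCommGroup V2]
  [Module K V0] [Module K V1] [Module K V2]
  {d1 : V1 →ₗ[K] V0} {d2 : V2 →ₗ[K] V1}

namespace Ell2

variable (E : Ell2 K V0 V1 V2 d1 d2)

theorem l01_d1_eq_l10_d1 (f g : V1) : E.l01 (d1 f) g = E.l10 f (d1 g) := by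
  have h := E.chain11 f g
  rwa [vanish11, map_zero, eq_comm, sub_eq_zero] at h

theorem l01_d1_swap (f g : V1) : E.l01 (d1 g) f = -E.l01 (d1 f) g := by
  rw [l01_d1_eq_l10_d1, anti10]

theorem l02_d1_eq_zero (f : V1) (b : V2) : E.l02 (d1 f) b = 0 := by
  simpa [E.vanish11, eq_comm] using E.chain12 f b

theorem l20_d1_eq_zero (a : V2) (g : V1) : E.l20 a (d1 g) = 0 := by
  rw [anti20, l02_d1_eq_zero, neg_zero]

theorem l10_d2_d1_eq_zero (hdd : ∀ a, d1 (d2 a) = 0) (a : V2) (g : V1) :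
    E.l10 (d2 a) (d1 g) = 0 := by
  rw [← l01_d1_eq_l10_d1, hdd, IsBilinear.map_zero_left E.bil01]

def toBracket (hdd : ∀ a, d1 (d2 a) = 0) : Bracket K V0 V1 V2 d1 d2 where
  B0 := E.l00
  B1 v w := (E.l00 v.1 w.1, E.l01 v.1 w.2 + E.l10 v.2 (w.1 + d1 w.2))
  B2 v w := (E.l00 v.1 w.1, E.l01 v.1 w.2.1 + E.l10 v.2.1 (w.1 + d1 w.2.1),
    E.l02 v.1 w.2.2 + E.l20 v.2.2 w.1)
  bil0 := E.bil00
  bil1 := by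
    let p0 := LinearMap.fst K V0 V1
    let p1 := LinearMap.snd K V0 V1
    exact (IsBilinear.comp E.bil00 p0 p0 .id).prod
      ((IsBilinear.comp E.bil01 p0 p1 .id).add
        (IsBilinear.comp E.bil10 p1 (p0 + d1 ∘ₗ p1) .id))
  bil2 := by
    let p0 := LinearMap.fst K V0 (V1 × V2)
    let p1 := LinearMap.fst K V1 V2 ∘ₗ LinearMap.snd K V0 (V1 × V2)
    let p2 := LinearMap.snd K V1 V2 ∘ₗ LinearMap.snd K V0 (V1 × V2)
    exact (IsBilinear.comp E.bil00 p0 p0 .id).prod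
      (((IsBilinear.comp E.bil01 p0 p1 .id).add
        (IsBilinear.comp E.bil10 p1 (p0 + d1 ∘ₗ p1) .id)).prod
      ((IsBilinear.comp E.bil02 p0 p2 .id).add (IsBilinear.comp E.bil20 p2 p0 .id)))
  anti0 := E.anti00
  anti1 := by
    rintro ⟨x, f⟩ ⟨y, g⟩
    refine Prod.ext (E.anti00 x y) ?_
    simp only [Prod.snd_neg, anti10, IsBilinear.map_add_left E.bil01, l01_d1_swap E f g]
    abel
  anti2 := by
    rintro ⟨x, f, a⟩ ⟨y, g, b⟩
    refine Prod.ext (E.anti00 x y) (Prod.ext ?_ ?_)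
    · simp only [Prod.snd_neg, Prod.fst_neg, anti10, IsBilinear.map_add_left E.bil01,
        l01_d1_swap E f g]
      abel
    · simp only [Prod.snd_neg, anti20]
      abel
  maps_s1 _ _ := rfl
  maps_t1 := by
    rintro ⟨x, f⟩ ⟨y, g⟩
    simp only [t1, map_add, chain01, chain10, IsBilinear.map_add_right E.bil00,
      IsBilinear.map_add_left E.bil00, IsBilinear.map_add_right E.bil10]
    abel
  maps_s2 _ _ := rfl
  maps_t2 := by
    rintro ⟨x, f, a⟩ ⟨y, g, b⟩
    refine Prod.ext rfl ?_
    simp only [t2, map_add, chain02, chain20, hdd, add_zero,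
      IsBilinear.map_add_right E.bil01, IsBilinear.map_add_left E.bil10,
      IsBilinear.map_add_right E.bil10, l10_d2_d1_eq_zero E hdd]
    abel
  maps_one0 x y := by
    simp [one0, IsBilinear.map_zero_right E.bil01, IsBilinear.map_zero_left E.bil10]
  maps_one1 v w := by
    simp [one1, IsBilinear.map_zero_right E.bil02, IsBilinear.map_zero_left E.bil20]
  maps_comp01 := by
    rintro ⟨x, f⟩ ⟨x', f'⟩ ⟨y, g⟩ ⟨y', g'⟩ (rfl : x + d1 f = x') (rfl : y + d1 g = y')
    refine Prod.ext rfl ?_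
    simp only [comp01, map_add, IsBilinear.map_add_right E.bil01,
      IsBilinear.map_add_left E.bil01, IsBilinear.map_add_right E.bil10,
      IsBilinear.map_add_left E.bil10, l01_d1_eq_l10_d1]
    abel
  maps_comp02 := by
    rintro ⟨x, f, a⟩ ⟨x', f', a'⟩ ⟨y, g, b⟩ ⟨y', g', b'⟩ hv hw
    simp only [Comp02, t1, t2, s1, s2, map_add, hdd, add_zero] at hv hw
    subst hv hw
    refine Prod.ext rfl (Prod.ext ?_ ?_)
    · simp only [comp02, map_add, IsBilinear.map_add_right E.bil01,
        IsBilinear.map_add_left E.bil01, IsBilinear.map_add_right E.bil10,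
        IsBilinear.map_add_left E.bil10, l01_d1_eq_l10_d1]
      abel
    · simp only [comp02, IsBilinear.map_add_right E.bil02, IsBilinear.map_add_left E.bil02,
        IsBilinear.map_add_right E.bil20, IsBilinear.map_add_left E.bil20, l02_d1_eq_zero,
        l20_d1_eq_zero, add_zero]
      abel
  maps_comp12 := by
    rintro ⟨x, f, a⟩ ⟨x', f', a'⟩ ⟨y, g, b⟩ ⟨y', g', b'⟩ hv hw
    obtain ⟨rfl, rfl⟩ := Prod.mk.inj hv
    obtain ⟨rfl, rfl⟩ := Prod.mk.inj hw
    refine Prod.ext rfl (Prod.ext rfl ?_)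
    simp only [comp12, IsBilinear.map_add_right E.bil02, IsBilinear.map_add_left E.bil20]
    abel

end Ell2

namespace Bracket

variable (F : Bracket K V0 V1 V2 d1 d2)

theorem B1_fst (v w : V0 × V1) : (F.B1 v w).1 = F.B0 v.1 w.1 :=
  F.maps_s1 v w

theorem B2_fst (v w : V0 × V1 × V2) : (F.B2 v w).1 = F.B0 v.1 w.1 :=
  (congrArg Prod.fst (F.maps_s2 v w)).trans (F.B1_fst _ _)

theorem B2_snd_fst (v w : V0 × V1 × V2) :
    (F.B2 v w).2.1 = (F.B1 (v.1, v.2.1) (w.1, w.2.1)).2 :=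
  congrArg Prod.snd (F.maps_s2 v w)

theorem B1_V1_V1 (f g : V1) : F.B1 ((0 : V0), f) (0, g) = F.B1 (d1 f, 0) (0, g) := by
  have h := F.maps_comp01 (0, f) (d1 f, 0) (0, 0) (0, g)
    (by simp [Comp01, t1, s1]) (by simp [Comp01, t1, s1])
  simp only [comp01, add_zero, zero_add, Prod.mk_zero_zero, IsBilinear.map_zero_right F.bil1,
    Prod.fst_zero, Prod.snd_zero] at h
  refine h.trans (Prod.ext ?_ rfl)
  simp only [B1_fst, IsBilinear.map_zero_right F.bil0]

theorem B2_V2_V1 (hdd : ∀ a, d1 (d2 a) = 0) (a : V2) (g : V1) :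
    F.B2 ((0 : V0), (0 : V1), a) (0, g, 0) = 0 := by
  have h := F.maps_comp02 (0, 0, a) (0, 0, 0) (0, g, 0) (d1 g, -g, 0)
    (by simp [Comp02, t1, t2, s1, s2, hdd]) (by simp [Comp02, t1, t2, s1, s2])
  simpa [comp02, Prod.mk_zero_zero, IsBilinear.map_zero_right F.bil2,
    IsBilinear.map_zero_left F.bil2, eq_comm] using h

theorem B2_V2_V2 (hdd : ∀ a, d1 (d2 a) = 0) (a b : V2) :
    F.B2 ((0 : V0), (0 : V1), a) (0, 0, b) = 0 := by
  have h := F.maps_comp02 (0, 0, a) (0, 0, 0) (0, 0, b) (0, 0, -b)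
    (by simp [Comp02, t1, t2, s1, s2, hdd]) (by simp [Comp02, t1, t2, s1, s2, hdd])
  simpa [comp02, Prod.mk_zero_zero, IsBilinear.map_zero_right F.bil2,
    IsBilinear.map_zero_left F.bil2, eq_comm] using h

theorem B2_V1_V2 (hdd : ∀ a, d1 (d2 a) = 0) (f : V1) (b : V2) :
    F.B2 ((0 : V0), f, (0 : V2)) (0, 0, b) = 0 := by
  have h := F.maps_comp02 (0, f, 0) (d1 f, -f, 0) (0, 0, b) (0, 0, 0)
    (by simp [Comp02, t1, t2, s1, s2]) (by simp [Comp02, t1, t2, s1, s2, hdd])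
  simpa [comp02, Prod.mk_zero_zero, IsBilinear.map_zero_right F.bil2,
    IsBilinear.map_zero_left F.bil2, eq_comm] using h

theorem B2_d1_V2_snd_snd (hdd : ∀ a, d1 (d2 a) = 0) (f : V1) (b : V2) :
    (F.B2 (d1 f, (0 : V1), (0 : V2)) (0, 0, b)).2.2 = 0 := by
  have h := F.maps_comp02 (0, f, 0) (d1 f, 0, 0) (0, 0, 0) (0, 0, b)
    (by simp [Comp02, t1, t2, s1, s2]) (by simp [Comp02, t1, t2, s1, s2])
  simpa [comp02, Prod.mk_zero_zero, IsBilinear.map_zero_right F.bil2, F.B2_V1_V2 hdd,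
    eq_comm] using congrArg (fun v => v.2.2) h

theorem d1_B1_snd (x : V0) (g : V1) : d1 (F.B1 (x, 0) (0, g)).2 = F.B0 x (d1 g) := by
  have h := F.maps_t1 (x, 0) (0, g)
  simpa only [t1, B1_fst, map_zero, add_zero, zero_add, IsBilinear.map_zero_right F.bil0]
    using h

theorem d2_B2_snd_snd (x : V0) (b : V2) :
    d2 (F.B2 (x, 0, 0) (0, 0, b)).2.2 = (F.B1 (x, 0) (0, d2 b)).2 := by
  have h := congrArg Prod.snd (F.maps_t2 (x, 0, 0) (0, 0, b))
  simpa only [t2, B2_snd_fst, map_zero, add_zero, zero_add, Prod.mk_zero_zero,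
    IsBilinear.map_zero_right F.bil1, Prod.snd_zero] using h

theorem B1_snd_eq (x : V0) (f : V1) (y : V0) (g : V1) :
    (F.B1 (x, f) (y, g)).2 = (F.B1 (x, 0) (0, g)).2 - (F.B1 (y + d1 g, 0) (0, f)).2 := by
  have hv : ((x, f) : V0 × V1) = (x, 0) + (0, f) := by simp
  have hw : ((y, g) : V0 × V1) = (y, 0) + (0, g) := by simp
  have hy : ((y + d1 g, 0) : V0 × V1) = (y, 0) + (d1 g, 0) := by simp
  have h_one : (F.B1 (x, 0) (y, 0)).2 = 0 := congrArg Prod.snd (F.maps_one0 x y)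
  rw [hv, hw, hy]
  simp only [IsBilinear.map_add_left F.bil1, IsBilinear.map_add_right F.bil1, Prod.snd_add,
    h_one, F.anti1 (0, f), F.B1_V1_V1 g f, Prod.snd_neg]
  abel

theorem B2_one1_snd_snd (x : V0) (f : V1) (y : V0) (g : V1) :
    (F.B2 (x, f, 0) (y, g, 0)).2.2 = 0 :=
  congrArg (fun v => v.2.2) (F.maps_one1 (x, f) (y, g))

theorem B2_snd_snd_eq (hdd : ∀ a, d1 (d2 a) = 0) (x : V0) (f : V1) (a : V2) (y : V0) (g : V1)
    (b : V2) :
    (F.B2 (x, f, a) (y, g, b)).2.2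
      = (F.B2 (x, 0, 0) (0, 0, b)).2.2 - (F.B2 (y, 0, 0) (0, 0, a)).2.2 := by
  have hv : ((x, f, a) : V0 × V1 × V2) = (x, 0, 0) + (0, f, 0) + (0, 0, a) := by simp
  have hw : ((y, g, b) : V0 × V1 × V2) = (y, 0, 0) + (0, g, 0) + (0, 0, b) := by simp
  rw [hv, hw]
  simp only [IsBilinear.map_add_left F.bil2, IsBilinear.map_add_right F.bil2, Prod.snd_add,
    B2_one1_snd_snd, F.B2_V1_V2 hdd, F.B2_V2_V1 hdd, F.B2_V2_V2 hdd, F.anti2 (0, 0, a),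
    Prod.snd_neg, Prod.snd_zero]
  abel

def toEll2 (hdd : ∀ a, d1 (d2 a) = 0) : Ell2 K V0 V1 V2 d1 d2 where
  l00 := F.B0
  l01 x g := (F.B1 (x, 0) (0, g)).2
  l10 f y := -(F.B1 (y, 0) (0, f)).2
  l02 x b := (F.B2 (x, 0, 0) (0, 0, b)).2.2
  l20 a y := -(F.B2 (y, 0, 0) (0, 0, a)).2.2
  l11 _ _ := 0
  bil00 := F.bil0
  bil01 := IsBilinear.comp F.bil1 (.inl K V0 V1) (.inr K V0 V1) (.snd K V0 V1)
  bil10 :=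
    (IsBilinear.comp F.bil1 (.inl K V0 V1) (.inr K V0 V1) (-LinearMap.snd K V0 V1)).flip
  bil02 := IsBilinear.comp F.bil2 (.inl K V0 (V1 × V2)) (.inr K V0 _ ∘ₗ .inr K V1 V2)
    (.snd K V1 V2 ∘ₗ .snd K V0 _)
  bil20 := (IsBilinear.comp F.bil2 (.inl K V0 (V1 × V2)) (.inr K V0 _ ∘ₗ .inr K V1 V2)
    (-(LinearMap.snd K V1 V2 ∘ₗ .snd K V0 _))).flip
  bil11 := IsBilinear.zero
  anti00 := F.anti0
  anti10 _ _ := rfl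
  anti20 _ _ := rfl
  anti11 _ _ := rfl
  chain01 := F.d1_B1_snd
  chain10 f y := by rw [map_neg, d1_B1_snd, F.anti0, neg_neg]
  chain02 := F.d2_B2_snd_snd
  chain20 a y := by rw [map_neg, d2_B2_snd_snd]
  chain11 f g := by
    rw [map_zero, ← B1_V1_V1, ← B1_V1_V1, F.anti1 (0, f), Prod.snd_neg, sub_neg_eq_add,
      neg_add_cancel]
  chain12 f b := by rw [F.B2_d1_V2_snd_snd hdd, sub_zero]
  vanish11 _ _ := rfl

end Bracket

attribute [ext] Ell2 Bracket

theorem Ell2.toEll2_toBracket (hdd : ∀ a, d1 (d2 a) = 0) (E : Ell2 K V0 V1 V2 d1 d2) :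
    (E.toBracket hdd).toEll2 hdd = E := by
  ext x y
  all_goals simp [Ell2.toBracket, Bracket.toEll2, IsBilinear.map_zero_right E.bil01,
    IsBilinear.map_zero_right E.bil02, E.anti10, E.anti20, E.vanish11]

theorem Bracket.toBracket_toEll2 (hdd : ∀ a, d1 (d2 a) = 0) (F : Bracket K V0 V1 V2 d1 d2) :
    (F.toEll2 hdd).toBracket hdd = F := by
  ext : 1
  · rfl
  · funext ⟨x, f⟩ ⟨y, g⟩
    ext
    · exact (F.B1_fst _ _).symm
    · rw [F.B1_snd_eq, sub_eq_add_neg]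
      rfl
  · funext ⟨x, f, a⟩ ⟨y, g, b⟩
    ext
    · exact (F.B2_fst _ _).symm
    · rw [F.B2_snd_fst, F.B1_snd_eq, sub_eq_add_neg]
      rfl
    · rw [F.B2_snd_snd_eq hdd, sub_eq_add_neg]
      rfl

def ell2EquivBracket (hdd : ∀ a, d1 (d2 a) = 0) :
    Ell2 K V0 V1 V2 d1 d2 ≃ Bracket K V0 V1 V2 d1 d2 where
  toFun E := E.toBracket hdd
  invFun F := F.toEll2 hdd
  left_inv := Ell2.toEll2_toBracket hdd
  right_inv := Bracket.toBracket_toEll2 hdd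

end GV

open GV

/-- There is a bijective correspondence between antisymmetric
bilinear 2-functors on `G(V)` and graded antisymmetric weight-0 chain maps `ℓ₂`
vanishing on `V₁ × V₁`; it sends `ℓ₂` to the bracket
`[(x,f,a),(y,g,b)] = (ℓ₂(x,y), ℓ₂(x,g) + ℓ₂(f, y + d g), ℓ₂(x,b) + ℓ₂(a,y))`
(and its truncations), and its inverse sends a bracket `[−,−]` to the chain map with
`ℓ₂(x,y) = [x,y]`, `ℓ₂(x,g) = [1ₓ,g]`, `ℓ₂(x,b) = [1²ₓ,b]` and `ℓ₂ = 0` on `V₁ × V₁`. -/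
theorem bracket_ell2_correspondence (K : Type) [Field K]
    (V0 V1 V2 : Type) [AddCommGroup V0] [AddCommGroup V1] [AddCommGroup V2]
    [Module K V0] [Module K V1] [Module K V2]
    (d1 : V1 →ₗ[K] V0) (d2 : V2 →ₗ[K] V1) (hdd : ∀ a, d1 (d2 a) = 0) :
    ∃ Φ : Ell2 K V0 V1 V2 d1 d2 ≃ Bracket K V0 V1 V2 d1 d2,
      (∀ E : Ell2 K V0 V1 V2 d1 d2,
        (∀ x y, (Φ E).B0 x y = E.l00 x y) ∧
        (∀ x f y g, (Φ E).B1 (x, f) (y, g) =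
            (E.l00 x y, E.l01 x g + E.l10 f (y + d1 g))) ∧
        (∀ x f a y g b, (Φ E).B2 (x, f, a) (y, g, b) =
            (E.l00 x y, E.l01 x g + E.l10 f (y + d1 g), E.l02 x b + E.l20 a y))) ∧
      (∀ F : Bracket K V0 V1 V2 d1 d2,
        (∀ x y, (Φ.symm F).l00 x y = F.B0 x y) ∧
        (∀ x g, (Φ.symm F).l01 x g = (F.B1 (one0 x) (0, g)).2) ∧
        (∀ x b, (Φ.symm F).l02 x b = (F.B2 (one1 (one0 x)) (0, 0, b)).2.2) ∧
        (∀ f g, (Φ.symm F).l11 f g = 0)) :=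
  ⟨ell2EquivBracket hdd,
    fun _ => ⟨fun _ _ => rfl, fun _ _ _ _ => rfl, fun _ _ _ _ _ _ => rfl⟩,
    fun _ => ⟨fun _ _ => rfl, fun _ _ => rfl, fun _ _ => rfl, fun _ _ => rfl⟩⟩
end

section
/- Let ℓ_2 be a graded antisymmetric chain map of weight 0 on V vanishing on V_1 × V_1, with associated bracket [−,−] on G(V), let x, y ∈ V_0, and let J be a trilinear map assigning to each (x,y,z) ∈ V_0^3 a 1-cell J_{xyz} ∈ L_1 with source [[x,y],z]. Then the naturality condition in the third argument — for every 2-cell α = (z,f,a) ∈ L_2, [[1^2_x,1^2_y],α] ∘_0 1_{J_{x,y,t^2(α)}} = 1_{J_{x,y,s^2(α)}} ∘_0 ([[1^2_x,α],1^2_y] + [1^2_x,[1^2_y,α]]) — holds for all x, y if and only if, for all x, y ∈ V_0, f ∈ V_1 and a ∈ V_2: (i) the V_1-components satisfy J^1_{x,y,d f} + [1_{[x,y]}, f] = [[1_x, f], 1_y] + [1_x, [1_y, f]], and (ii) in V_2, [1^2_{[x,y]}, a] = [[1^2_x, a], 1^2_y] + [1^2_x, [1^2_y, a]]. -/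
/- The linear 2-category G(V) associated with a 3-term chain complex
   V₂ --d₂--> V₁ --d₁--> V₀ (d₁ ∘ d₂ = 0):
   L₀ = V₀, L₁ = V₀ × V₁, L₂ = V₀ × V₁ × V₂,
   s(v₀,…,v_m) = (v₀,…,v_{m-1}), t(v₀,…,v_m) = (v₀,…,v_{m-1} + d v_m),
   1_{(v₀,…,v_m)} = (v₀,…,v_m,0),
   (v₀,…,v_m) ∘_p (w₀,…,w_m) = (v₀,…,v_p, v_{p+1}+w_{p+1}, …, v_m+w_m). -/

namespace GV

variable {K : Type} [Field K] {V0 V1 V2 : Type}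
  [AddCommGroup V0] [AddCommGroup V1] [AddCommGroup V2]
  [Module K V0] [Module K V1] [Module K V2]

variable (d1 : V1 →ₗ[K] V0) (d2 : V2 →ₗ[K] V1)

variable {d1} {d2} in
/-- The bracket of 1-cells associated with `ℓ₂`:
`[(x,f),(y,g)] = (ℓ₂(x,y), ℓ₂(x,g) + ℓ₂(f, y + d g))`. -/
def br1 (E : Ell2 K V0 V1 V2 d1 d2) (v w : V0 × V1) : V0 × V1 :=
  (E.l00 v.1 w.1, E.l01 v.1 w.2 + E.l10 v.2 (w.1 + d1 w.2))

variable {d1} {d2} in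
/-- The bracket of 2-cells associated with `ℓ₂`:
`[(x,f,a),(y,g,b)] = (ℓ₂(x,y), ℓ₂(x,g) + ℓ₂(f, y + d g), ℓ₂(x,b) + ℓ₂(a,y))`. -/
def br2 (E : Ell2 K V0 V1 V2 d1 d2) (v w : V0 × V1 × V2) : V0 × V1 × V2 :=
  (E.l00 v.1 w.1, E.l01 v.1 w.2.1 + E.l10 v.2.1 (w.1 + d1 w.2.1),
    E.l02 v.1 w.2.2 + E.l20 v.2.2 w.1)

end GV

/-! Read componentwise, the naturality square at `α = (z, f, a)` says three things: in `V₀` it is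
the source condition on `J`; in `V₂` it is (ii); in `V₁` it reads
`[[x,y],f] + J¹_{x,y,z+df} = J¹_{x,y,z} + [[x,f],y] + [x,[y,f]]`, which by linearity of `J` in
its last argument does not depend on `z` and is (i). -/

namespace GV

@[simp]
lemma one1_one0 {V0 V1 V2 : Type} [AddCommGroup V1] [AddCommGroup V2] (x : V0) :
    one1 (one0 x : V0 × V1) = ((x, 0, 0) : V0 × V1 × V2) :=
  rfl

variable {K : Type} [Field K] {V0 V1 V2 : Type}
  [AddCommGroup V0] [AddCommGroup V1] [AddCommGroup V2]
  [Module K V0] [Module K V1] [Module K V2]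
  {d1 : V1 →ₗ[K] V0} {d2 : V2 →ₗ[K] V1} (E : Ell2 K V0 V1 V2 d1 d2)

namespace Ell2

@[simp]
lemma l01_zero (x : V0) : E.l01 x 0 = 0 := (E.bil01.1 x).map_zero

@[simp]
lemma l10_zero (y : V0) : E.l10 0 y = 0 := (E.bil10.2 y).map_zero

@[simp]
lemma l02_zero (x : V0) : E.l02 x 0 = 0 := (E.bil02.1 x).map_zero

@[simp]
lemma l20_zero (y : V0) : E.l20 0 y = 0 := (E.bil20.2 y).map_zero

end Ell2

@[simp]
lemma br1_one0_left (x : V0) (v : V0 × V1) :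
    br1 E (one0 x) v = (E.l00 x v.1, E.l01 x v.2) := by
  simp [br1, one0]

@[simp]
lemma br1_one0_right (v : V0 × V1) (y : V0) :
    br1 E v (one0 y) = (E.l00 v.1 y, E.l10 v.2 y) := by
  simp [br1, one0]

@[simp]
lemma br2_one1_one0_left (x : V0) (v : V0 × V1 × V2) :
    br2 E (x, 0, 0) v = (E.l00 x v.1, E.l01 x v.2.1, E.l02 x v.2.2) := by
  simp [br2]

@[simp]
lemma br2_one1_one0_right (v : V0 × V1 × V2) (y : V0) :
    br2 E v (y, 0, 0) = (E.l00 v.1 y, E.l10 v.2.1 y, E.l20 v.2.2 y) := by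
  simp [br2]

lemma naturality_iff_components (hdd : ∀ a, d1 (d2 a) = 0) (J : V0 → V0 → V0 → V0 × V1)
    (x y z : V0) (f : V1) (a : V2) :
    comp02 (br2 E (br2 E (x, 0, 0) (y, 0, 0)) (z, f, a))
        (one1 (J x y (t1 d1 (t2 d2 (z, f, a))))) =
      comp02 (one1 (J x y z))
        (br2 E (br2 E (x, 0, 0) (z, f, a)) (y, 0, 0) +
          br2 E (x, 0, 0) (br2 E (y, 0, 0) (z, f, a))) ↔
    E.l00 (E.l00 x y) z = (J x y z).1 ∧
      E.l01 (E.l00 x y) f + (J x y (z + d1 f)).2 =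
        (J x y z).2 + (E.l10 (E.l01 x f) y + E.l01 x (E.l01 y f)) ∧
      E.l02 (E.l00 x y) a = E.l20 (E.l02 x a) y + E.l02 x (E.l02 y a) := by
  simp [comp02, one1, t1, t2, hdd]

end GV

open GV

/-- Let `ℓ₂` be a graded antisymmetric weight-0 chain map on `V`
vanishing on `V₁ × V₁`, with associated bracket `[−,−]` on `G(V)`, and let `J` assign to
`(x,y,z) ∈ V₀³` a 1-cell `J_{xyz}` with source `[[x,y],z]`.  Then the naturality
condition in the third argument holds for all `x, y` iff (i) the `V₁`-components satisfy
`J¹_{x,y,df} + [1_{[x,y]},f] = [[1ₓ,f],1_y] + [1ₓ,[1_y,f]]` and (ii) in `V₂`,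
`[1²_{[x,y]},a] = [[1²ₓ,a],1²_y] + [1²ₓ,[1²_y,a]]`. -/
theorem jacobiator_naturality_iff (K : Type) [Field K]
    (V0 V1 V2 : Type) [AddCommGroup V0] [AddCommGroup V1] [AddCommGroup V2]
    [Module K V0] [Module K V1] [Module K V2]
    (d1 : V1 →ₗ[K] V0) (d2 : V2 →ₗ[K] V1) (hdd : ∀ a, d1 (d2 a) = 0)
    (E : Ell2 K V0 V1 V2 d1 d2)
    (J : V0 → V0 → V0 → V0 × V1)
    (hsrc : ∀ x y z, (J x y z).1 = E.l00 (E.l00 x y) z)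
    (htri : (∀ x y, IsLinearMap K (J x y)) ∧
      (∀ x z, IsLinearMap K (fun y => J x y z)) ∧
      (∀ y z, IsLinearMap K (fun x => J x y z))) :
    (∀ (x y z : V0) (f : V1) (a : V2),
        comp02 (br2 E (br2 E (x, 0, 0) (y, 0, 0)) (z, f, a))
            (one1 (J x y (t1 d1 (t2 d2 (z, f, a))))) =
          comp02 (one1 (J x y z))
            (br2 E (br2 E (x, 0, 0) (z, f, a)) (y, 0, 0) +
              br2 E (x, 0, 0) (br2 E (y, 0, 0) (z, f, a))))
    ↔
    ((∀ (x y : V0) (f : V1),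
        (J x y (d1 f)).2 + (br1 E (one0 (E.l00 x y)) (0, f)).2 =
          (br1 E (br1 E (one0 x) (0, f)) (one0 y)).2 +
            (br1 E (one0 x) (br1 E (one0 y) (0, f))).2) ∧
     (∀ (x y : V0) (a : V2),
        (br2 E (one1 (one0 (E.l00 x y))) (0, 0, a)).2.2 =
          (br2 E (br2 E (x, 0, 0) (0, 0, a)) (y, 0, 0)).2.2 +
            (br2 E (x, 0, 0) (br2 E (y, 0, 0) (0, 0, a))).2.2)) := by
  have hJ (x y z w : V0) : (J x y (z + w)).2 = (J x y z).2 + (J x y w).2 :=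
    congrArg Prod.snd ((htri.1 x y).map_add z w)
  have hJ0 (x y : V0) : (J x y 0).2 = 0 := congrArg Prod.snd (htri.1 x y).map_zero
  simp only [naturality_iff_components E hdd, hsrc, true_and]
  simp only [one1_one0, br1_one0_left, br1_one0_right, br2_one1_one0_left,
    br2_one1_one0_right]
  constructor
  · intro h
    refine ⟨fun x y f => ?_, fun x y a => (h x y 0 0 a).2⟩
    simpa [hJ0, add_comm] using (h x y 0 f 0).1
  · rintro ⟨h1, h2⟩ x y z f a
    refine ⟨?_, h2 x y a⟩
    rw [hJ, ← h1]
    abel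
end

section
/- Let ℓ_2 be a graded antisymmetric chain map of weight 0 on V vanishing on V_1 × V_1 with associated bracket [−,−] on G(V), and let J be the Jacobiator associated with an antisymmetric trilinear map ℓ_3 : V_0^3 → V_1 satisfying the L-infinity condition n = 3 (and vanishing in total degree ≥ 1). Then the assignment ℓ_4 ↦ μ, μ_{xyzu} = ([[[x,y],z],u], h_{xyzu}, −ℓ_4(x,y,z,u)), is a bijection between: (a) antisymmetric quadrilinear maps ℓ_4 : V_0^4 → V_2 satisfying, for all x,y,z,u ∈ V_0 and f ∈ V_1, d(ℓ_4(x,y,z,u)) − h_{xyzu} + e_{xyzu} = 0 and ℓ_4(d f, x, y, z) = 0 (these express the L-infinity condition n = 4 under the stated vanishing assumptions on ℓ_2 and ℓ_3); and (b) skew-symmetric quadrilinear 2-modifications μ : η ⇛ ε (Identiators). -/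
namespace GV

variable {K : Type} [Field K] {V0 V1 V2 : Type}
  [AddCommGroup V0] [AddCommGroup V1] [AddCommGroup V2]
  [Module K V0] [Module K V1] [Module K V2]
  {d1 : V1 →ₗ[K] V0} {d2 : V2 →ₗ[K] V1}

/-- An antisymmetric trilinear map `ℓ₃ : V₀³ → V₁` satisfying the L∞ condition `n = 3`
(for its weight-1 graded antisymmetric extension by zero in total degree ≥ 1). -/
structure Ell3 (E : Ell2 K V0 V1 V2 d1 d2) : Type where
  l3 : V0 → V0 → V0 → V1
  tri : (∀ x y, IsLinearMap K (l3 x y)) ∧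
    (∀ x z, IsLinearMap K (fun y => l3 x y z)) ∧
    (∀ y z, IsLinearMap K (fun x => l3 x y z))
  anti12 : ∀ x y z, l3 x y z = -l3 y x z
  anti23 : ∀ x y z, l3 x y z = -l3 x z y
  cond1 : ∀ x y z, d1 (l3 x y z) + E.l00 (E.l00 x y) z - E.l00 (E.l00 x z) y +
      E.l00 (E.l00 y z) x = 0
  cond2 : ∀ x y f, E.l01 (E.l00 x y) f - E.l10 (E.l01 x f) y + E.l10 (E.l01 y f) x +
      l3 (d1 f) x y = 0
  cond3 : ∀ x y a, E.l02 (E.l00 x y) a - E.l20 (E.l02 x a) y + E.l20 (E.l02 y a) x = 0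

/-- A Jacobiator: a skew-symmetric trilinear natural 2-transformation
`[[−,−],•] ⇒ [[−,•],−] + [−,[−,•]]`. -/
structure Jacobiator (E : Ell2 K V0 V1 V2 d1 d2) : Type where
  J : V0 → V0 → V0 → V0 × V1
  tri : (∀ x y, IsLinearMap K (J x y)) ∧
    (∀ x z, IsLinearMap K (fun y => J x y z)) ∧
    (∀ y z, IsLinearMap K (fun x => J x y z))
  src : ∀ x y z, (J x y z).1 = E.l00 (E.l00 x y) z
  tgt : ∀ x y z, t1 d1 (J x y z) = E.l00 (E.l00 x z) y + E.l00 x (E.l00 y z)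
  anti12 : ∀ x y z, (J x y z).2 = -(J y x z).2
  anti23 : ∀ x y z, (J x y z).2 = -(J x z y).2
  nat3 : ∀ (x y z : V0) (f : V1) (a : V2),
      comp02 (br2 E (br2 E (x, 0, 0) (y, 0, 0)) (z, f, a))
          (one1 (J x y (t1 d1 (t2 d2 (z, f, a))))) =
        comp02 (one1 (J x y z))
          (br2 E (br2 E (x, 0, 0) (z, f, a)) (y, 0, 0) +
            br2 E (x, 0, 0) (br2 E (y, 0, 0) (z, f, a)))
  nat1 : ∀ (x y z : V0) (f : V1) (a : V2),
      comp02 (br2 E (br2 E (x, f, a) (y, 0, 0)) (z, 0, 0))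
          (one1 (J (t1 d1 (t2 d2 (x, f, a))) y z)) =
        comp02 (one1 (J x y z))
          (br2 E (br2 E (x, f, a) (z, 0, 0)) (y, 0, 0) +
            br2 E (x, f, a) (br2 E (y, 0, 0) (z, 0, 0)))
  nat2 : ∀ (x y z : V0) (f : V1) (a : V2),
      comp02 (br2 E (br2 E (x, 0, 0) (y, f, a)) (z, 0, 0))
          (one1 (J x (t1 d1 (t2 d2 (y, f, a))) z)) =
        comp02 (one1 (J x y z))
          (br2 E (br2 E (x, 0, 0) (z, 0, 0)) (y, f, a) +
            br2 E (x, 0, 0) (br2 E (y, f, a) (z, 0, 0)))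

end GV

namespace GV

variable {K : Type} [Field K] {V0 V1 V2 : Type}
  [AddCommGroup V0] [AddCommGroup V1] [AddCommGroup V2]
  [Module K V0] [Module K V1] [Module K V2]
  {d1 : V1 →ₗ[K] V0} {d2 : V2 →ₗ[K] V1}

/-- The Jacobiator 1-cell associated with `ℓ₃`: `J_{xyz} = ([[x,y],z], ℓ₃(x,y,z))`. -/
def Jc (E : Ell2 K V0 V1 V2 d1 d2) (T : Ell3 E) (x y z : V0) : V0 × V1 :=
  (E.l00 (E.l00 x y) z, T.l3 x y z)

/-- The 1-cell
`η_{xyzu} = [J_{xyz},1_u] ∘₀ (J_{[x,z],y,u} + J_{x,[y,z],u}) ∘₀ ([J_{xzu},1_y] + 1)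
  ∘₀ ([1_x,J_{yzu}] + 1)`, the unlabelled identity 1-cells being determined by
composability. -/
def eta (E : Ell2 K V0 V1 V2 d1 d2) (T : Ell3 E) (x y z u : V0) : V0 × V1 :=
  let g1 := br1 E (Jc E T x y z) (one0 u)
  let g2 := Jc E T (E.l00 x z) y u + Jc E T x (E.l00 y z) u
  let N3 := br1 E (Jc E T x z u) (one0 y)
  let g3 := N3 + one0 (t1 d1 g2 - N3.1)
  let N4 := br1 E (one0 x) (Jc E T y z u)
  let g4 := N4 + one0 (t1 d1 g3 - N4.1)
  comp01 (comp01 (comp01 g1 g2) g3) g4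

/-- The 1-cell
`ε_{xyzu} = J_{[x,y],z,u} ∘₀ ([J_{xyu},1_z] + 1)
  ∘₀ (J_{x,[y,u],z} + J_{[x,u],y,z} + J_{x,y,[z,u]})`. -/
def eps (E : Ell2 K V0 V1 V2 d1 d2) (T : Ell3 E) (x y z u : V0) : V0 × V1 :=
  let g1 := Jc E T (E.l00 x y) z u
  let N2 := br1 E (Jc E T x y u) (one0 z)
  let g2 := N2 + one0 (t1 d1 g1 - N2.1)
  let g3 := Jc E T x (E.l00 y u) z + Jc E T (E.l00 x u) y z + Jc E T x y (E.l00 z u)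
  comp01 (comp01 g1 g2) g3

/-- The quadrilinear 2-functor `F`, `F(α,β,γ,δ) = [[[α,β],γ],δ]`, on 2-cells. -/
def Fq (E : Ell2 K V0 V1 V2 d1 d2) (a b c d : V0 × V1 × V2) : V0 × V1 × V2 :=
  br2 E (br2 E (br2 E a b) c) d

/-- The quadrilinear 2-functor `G`,
`G(α,β,γ,δ) = [α,[[β,δ],γ]] + [α,[β,[γ,δ]]] + [[[α,δ],γ],β] + [[α,[γ,δ]],β]
  + [[α,γ],[β,δ]] + [[α,δ],[β,γ]]`, on 2-cells. -/
def Gq (E : Ell2 K V0 V1 V2 d1 d2) (a b c d : V0 × V1 × V2) : V0 × V1 × V2 :=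
  br2 E a (br2 E (br2 E b d) c) + br2 E a (br2 E b (br2 E c d)) +
    br2 E (br2 E (br2 E a d) c) b + br2 E (br2 E a (br2 E c d)) b +
    br2 E (br2 E a c) (br2 E b d) + br2 E (br2 E a d) (br2 E b c)

/-- An antisymmetric quadrilinear map `ℓ₄ : V₀⁴ → V₂` satisfying the L∞ condition
`n = 4` (in the form `d ℓ₄(x,y,z,u) − h_{xyzu} + e_{xyzu} = 0`, `ℓ₄(d f,x,y,z) = 0`). -/
structure Ell4 (E : Ell2 K V0 V1 V2 d1 d2) (T : Ell3 E) : Type where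
  l4 : V0 → V0 → V0 → V0 → V2
  quad : (∀ x y z, IsLinearMap K (l4 x y z)) ∧
    (∀ x y u, IsLinearMap K (fun z => l4 x y z u)) ∧
    (∀ x z u, IsLinearMap K (fun y => l4 x y z u)) ∧
    (∀ y z u, IsLinearMap K (fun x => l4 x y z u))
  anti12 : ∀ x y z u, l4 x y z u = -l4 y x z u
  anti23 : ∀ x y z u, l4 x y z u = -l4 x z y u
  anti34 : ∀ x y z u, l4 x y z u = -l4 x y u z
  cond1 : ∀ x y z u,
      d2 (l4 x y z u) - (eta E T x y z u).2 + (eps E T x y z u).2 = 0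
  cond2 : ∀ (f : V1) (x y z : V0), l4 (d1 f) x y z = 0

/-- An Identiator: a skew-symmetric quadrilinear 2-modification `μ : η ⇛ ε`. -/
structure Identiator (E : Ell2 K V0 V1 V2 d1 d2) (T : Ell3 E) : Type where
  mu : V0 → V0 → V0 → V0 → V0 × V1 × V2
  quad : (∀ x y z, IsLinearMap K (mu x y z)) ∧
    (∀ x y u, IsLinearMap K (fun z => mu x y z u)) ∧
    (∀ x z u, IsLinearMap K (fun y => mu x y z u)) ∧
    (∀ y z u, IsLinearMap K (fun x => mu x y z u))
  src : ∀ x y z u, s2 (mu x y z u) = eta E T x y z u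
  tgt : ∀ x y z u, t2 d2 (mu x y z u) = eps E T x y z u
  anti12 : ∀ x y z u, (mu x y z u).2.2 = -(mu y x z u).2.2
  anti23 : ∀ x y z u, (mu x y z u).2.2 = -(mu x z y u).2.2
  anti34 : ∀ x y z u, (mu x y z u).2.2 = -(mu x y u z).2.2
  mod4 : ∀ (x y z u : V0) (f : V1) (a : V2),
      comp02 (Fq E (x, 0, 0) (y, 0, 0) (z, 0, 0) (u, f, a))
          (mu x y z (t1 d1 (t2 d2 (u, f, a)))) =
        comp02 (mu x y z u) (Gq E (x, 0, 0) (y, 0, 0) (z, 0, 0) (u, f, a))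
  mod3 : ∀ (x y z u : V0) (f : V1) (a : V2),
      comp02 (Fq E (x, 0, 0) (y, 0, 0) (z, f, a) (u, 0, 0))
          (mu x y (t1 d1 (t2 d2 (z, f, a))) u) =
        comp02 (mu x y z u) (Gq E (x, 0, 0) (y, 0, 0) (z, f, a) (u, 0, 0))
  mod2 : ∀ (x y z u : V0) (f : V1) (a : V2),
      comp02 (Fq E (x, 0, 0) (y, f, a) (z, 0, 0) (u, 0, 0))
          (mu x (t1 d1 (t2 d2 (y, f, a))) z u) =
        comp02 (mu x y z u) (Gq E (x, 0, 0) (y, f, a) (z, 0, 0) (u, 0, 0))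
  mod1 : ∀ (x y z u : V0) (f : V1) (a : V2),
      comp02 (Fq E (x, f, a) (y, 0, 0) (z, 0, 0) (u, 0, 0))
          (mu (t1 d1 (t2 d2 (x, f, a))) y z u) =
        comp02 (mu x y z u) (Gq E (x, f, a) (y, 0, 0) (z, 0, 0) (u, 0, 0))

end GV


/-!
Since `s μ_{xyzu} = η_{xyzu}`, an Identiator is determined by the `V₂`-component `m` of its
2-cells, and its target is `ε_{xyzu}` exactly when `d m = e_{xyzu} - h_{xyzu}`, which for
`m = -ℓ₄` is the first `n = 4` condition. In the modification condition for a 2-cell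
`(v, f, a)` in one argument, the `V₀`- and `V₁`-components hold for every `m`: the
`V₁`-component is the naturality of `η`, a consequence of the `n = 3` conditions on `ℓ₃`, and
the `V₂`-components of `F` and `G` agree because `ℓ₂` makes `V₂` a representation of `V₀`. So
the condition only asks that `m` be invariant under adding `d f` to that argument; for
multilinear `m = -ℓ₄` this is `ℓ₄(d f, …) = 0` together with antisymmetry.
-/

namespace GV

lemma comp02_mk_eq_comp02_mk_iff {V0 V1 V2 : Type} [AddCommGroup V1] [AddCommGroup V2]
    {v w : V0 × V1 × V2} {p q : V0 × V1} {b c : V2}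
    (h0 : v.1 = q.1) (h1 : v.2.1 + p.2 = q.2 + w.2.1) (h2 : v.2.2 = w.2.2) :
    comp02 v (p.1, p.2, b) = comp02 (q.1, q.2, c) w ↔ b = c := by
  simp only [comp02, Prod.mk.injEq, h0, h1, h2, true_and, add_comm c, add_right_inj]

variable {K : Type} [Field K] {V0 V1 V2 : Type}
  [AddCommGroup V0] [AddCommGroup V1] [AddCommGroup V2]
  [Module K V0] [Module K V1] [Module K V2]
  {d1 : V1 →ₗ[K] V0} {d2 : V2 →ₗ[K] V1}

lemma t1_t2_mk (hdd : ∀ a, d1 (d2 a) = 0) (v : V0) (f : V1) (a : V2) :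
    t1 d1 (t2 d2 (v, f, a)) = v + d1 f := by
  simp only [t1, t2, map_add, hdd, add_zero]

lemma isLinearMap_neg_snd_snd {W : Type} [AddCommGroup W] [Module K W]
    {g : W → V0 × V1 × V2} (hg : IsLinearMap K g) : IsLinearMap K fun w => -(g w).2.2 :=
  ⟨fun v w => by rw [hg.map_add]; exact neg_add _ _,
    fun c v => by rw [hg.map_smul]; exact (smul_neg c _).symm⟩

namespace Ell2

variable (E : Ell2 K V0 V1 V2 d1 d2)

lemma l00_add_left (x x' y : V0) : E.l00 (x + x') y = E.l00 x y + E.l00 x' y :=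
  (E.bil00.2 y).map_add x x'
lemma l00_add_right (x y y' : V0) : E.l00 x (y + y') = E.l00 x y + E.l00 x y' :=
  (E.bil00.1 x).map_add y y'
lemma l00_neg_left (x y : V0) : E.l00 (-x) y = -E.l00 x y := (E.bil00.2 y).map_neg x
lemma l00_neg_right (x y : V0) : E.l00 x (-y) = -E.l00 x y := (E.bil00.1 x).map_neg y
lemma l00_smul_left (c : K) (x y : V0) : E.l00 (c • x) y = c • E.l00 x y :=
  (E.bil00.2 y).map_smul c x
lemma l00_smul_right (c : K) (x y : V0) : E.l00 x (c • y) = c • E.l00 x y :=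
  (E.bil00.1 x).map_smul c y

lemma l01_add_left (x x' : V0) (f : V1) : E.l01 (x + x') f = E.l01 x f + E.l01 x' f :=
  (E.bil01.2 f).map_add x x'
lemma l01_add_right (x : V0) (f f' : V1) : E.l01 x (f + f') = E.l01 x f + E.l01 x f' :=
  (E.bil01.1 x).map_add f f'
lemma l01_neg_left (x : V0) (f : V1) : E.l01 (-x) f = -E.l01 x f := (E.bil01.2 f).map_neg x
lemma l01_neg_right (x : V0) (f : V1) : E.l01 x (-f) = -E.l01 x f := (E.bil01.1 x).map_neg f
lemma l01_zero_left (f : V1) : E.l01 0 f = 0 := (E.bil01.2 f).map_zero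
lemma l01_zero_right (x : V0) : E.l01 x (0 : V1) = 0 := (E.bil01.1 x).map_zero
lemma l01_smul_left (c : K) (x : V0) (f : V1) : E.l01 (c • x) f = c • E.l01 x f :=
  (E.bil01.2 f).map_smul c x
lemma l01_smul_right (c : K) (x : V0) (f : V1) : E.l01 x (c • f) = c • E.l01 x f :=
  (E.bil01.1 x).map_smul c f

lemma l02_add_right (x : V0) (a a' : V2) : E.l02 x (a + a') = E.l02 x a + E.l02 x a' :=
  (E.bil02.1 x).map_add a a'
lemma l02_neg_right (x : V0) (a : V2) : E.l02 x (-a) = -E.l02 x a := (E.bil02.1 x).map_neg a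
lemma l02_zero_right (x : V0) : E.l02 x (0 : V2) = 0 := (E.bil02.1 x).map_zero

lemma l01_d1_comm (f g : V1) : E.l01 (d1 f) g = -E.l01 (d1 g) f := by
  have h := E.chain11 f g
  rw [E.vanish11, map_zero, E.anti10] at h
  rw [eq_neg_iff_add_eq_zero, ← sub_neg_eq_add, ← h]

lemma l00_d1_left (f : V1) (y : V0) : E.l00 (d1 f) y = -d1 (E.l01 y f) := by
  rw [← E.chain10, E.anti10, map_neg]

lemma l00_d1_right (x : V0) (f : V1) : E.l00 x (d1 f) = d1 (E.l01 x f) := (E.chain01 x f).symm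

end Ell2

namespace Ell3

variable {E : Ell2 K V0 V1 V2 d1 d2} (T : Ell3 E)

lemma l3_add_1 (x x' y z : V0) : T.l3 (x + x') y z = T.l3 x y z + T.l3 x' y z :=
  (T.tri.2.2 y z).map_add x x'
lemma l3_add_2 (x y y' z : V0) : T.l3 x (y + y') z = T.l3 x y z + T.l3 x y' z :=
  (T.tri.2.1 x z).map_add y y'
lemma l3_add_3 (x y z z' : V0) : T.l3 x y (z + z') = T.l3 x y z + T.l3 x y z' :=
  (T.tri.1 x y).map_add z z'
lemma l3_neg_1 (x y z : V0) : T.l3 (-x) y z = -T.l3 x y z := (T.tri.2.2 y z).map_neg x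
lemma l3_neg_2 (x y z : V0) : T.l3 x (-y) z = -T.l3 x y z := (T.tri.2.1 x z).map_neg y
lemma l3_smul_1 (c : K) (x y z : V0) : T.l3 (c • x) y z = c • T.l3 x y z :=
  (T.tri.2.2 y z).map_smul c x
lemma l3_smul_2 (c : K) (x y z : V0) : T.l3 x (c • y) z = c • T.l3 x y z :=
  (T.tri.2.1 x z).map_smul c y
lemma l3_smul_3 (c : K) (x y z : V0) : T.l3 x y (c • z) = c • T.l3 x y z :=
  (T.tri.1 x y).map_smul c z

lemma d1_l3 (x y z : V0) :
    d1 (T.l3 x y z) = E.l00 (E.l00 x z) y - E.l00 (E.l00 x y) z - E.l00 (E.l00 y z) x := by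
  rw [← sub_eq_zero, ← T.cond1 x y z]
  abel

lemma l3_d1_1 (f : V1) (x y : V0) :
    T.l3 (d1 f) x y = E.l01 x (E.l01 y f) - E.l01 y (E.l01 x f) - E.l01 (E.l00 x y) f := by
  rw [← sub_eq_zero, ← T.cond2 x y f, E.anti10, E.anti10]
  abel

lemma l3_d1_2 (f : V1) (x y : V0) : T.l3 x (d1 f) y = -T.l3 (d1 f) x y := T.anti12 _ _ _

lemma l3_d1_3 (f : V1) (x y : V0) : T.l3 x y (d1 f) = T.l3 (d1 f) x y := by
  rw [T.anti23, T.anti12, neg_neg]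

-- The orientation of `l01_d1_comm` that is safe as a rewrite rule.
lemma l01_d1_l3 (f : V1) (x y z : V0) :
    E.l01 (d1 f) (T.l3 x y z) = -E.l01 (d1 (T.l3 x y z)) f := E.l01_d1_comm f _

include T in
lemma l02_l00 (x y : V0) (a : V2) :
    E.l02 (E.l00 x y) a = E.l02 x (E.l02 y a) - E.l02 y (E.l02 x a) := by
  rw [← sub_eq_zero, ← T.cond3 x y a, E.anti20, E.anti20]
  abel

end Ell3

open Ell2 Ell3

variable (E : Ell2 K V0 V1 V2 d1 d2) (T : Ell3 E)

lemma eta_fst (x y z u : V0) : (eta E T x y z u).1 = E.l00 (E.l00 (E.l00 x y) z) u := rfl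

lemma eta_snd (x y z u : V0) :
    (eta E T x y z u).2 = -E.l01 u (T.l3 x y z) + T.l3 (E.l00 x z) y u + T.l3 x (E.l00 y z) u
      - E.l01 y (T.l3 x z u) + E.l01 x (T.l3 y z u) := by
  simp only [eta, comp01, br1, Jc, one0, Prod.snd_add, map_zero, add_zero, zero_add,
    l01_zero_right, E.anti10]
  abel

/- Expanding by multilinearity, every `ℓ₃` with an argument in the image of `d` and every
`d ℓ₃` is eliminated through the `n = 3` conditions; what is left cancels up to at most one
instance of the antisymmetry of `ℓ₂` on `V₀`. -/
lemma eta_snd_naturality_4 (x y z u : V0) (f : V1) (a : V2) :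
    (Fq E (x, 0, 0) (y, 0, 0) (z, 0, 0) (u, f, a)).2.1 + (eta E T x y z (u + d1 f)).2 =
      (eta E T x y z u).2 + (Gq E (x, 0, 0) (y, 0, 0) (z, 0, 0) (u, f, a)).2.1 := by
  simp only [Fq, Gq, br2, eta_snd, Prod.snd_add, Prod.fst_add, map_zero, map_add, map_neg,
    add_zero, zero_add, sub_eq_add_neg, neg_neg, neg_add, E.anti10, E.anti00 x (E.l00 y z),
    l01_add_left, l01_add_right, l01_neg_left, l01_neg_right, l01_zero_left, l01_zero_right,
    l3_add_3, d1_l3, l3_d1_1, l3_d1_3, l01_d1_l3]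
  abel

lemma eta_snd_naturality_3 (x y z u : V0) (f : V1) (a : V2) :
    (Fq E (x, 0, 0) (y, 0, 0) (z, f, a) (u, 0, 0)).2.1 + (eta E T x y (z + d1 f) u).2 =
      (eta E T x y z u).2 + (Gq E (x, 0, 0) (y, 0, 0) (z, f, a) (u, 0, 0)).2.1 := by
  simp only [Fq, Gq, br2, eta_snd, Prod.snd_add, Prod.fst_add, map_zero, map_add, map_neg,
    add_zero, zero_add, sub_eq_add_neg, neg_neg, neg_add, E.anti10, l00_add_right,
    l01_add_left, l01_add_right, l01_neg_left, l01_neg_right, l01_zero_left, l01_zero_right,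
    l3_add_1, l3_add_2, l3_add_3, l00_d1_right, l3_d1_1, l3_d1_2, l3_d1_3]
  abel

lemma eta_snd_naturality_2 (x y z u : V0) (f : V1) (a : V2) :
    (Fq E (x, 0, 0) (y, f, a) (z, 0, 0) (u, 0, 0)).2.1 + (eta E T x (y + d1 f) z u).2 =
      (eta E T x y z u).2 + (Gq E (x, 0, 0) (y, f, a) (z, 0, 0) (u, 0, 0)).2.1 := by
  simp only [Fq, Gq, br2, eta_snd, Prod.snd_add, Prod.fst_add, map_zero, map_add, map_neg,
    add_zero, zero_add, sub_eq_add_neg, neg_neg, neg_add, E.anti10, E.anti00 x (E.l00 z u),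
    l00_add_left, l00_neg_left,
    l01_add_left, l01_add_right, l01_neg_left, l01_neg_right, l01_zero_left, l01_zero_right,
    l3_add_1, l3_add_2, l3_neg_2, l00_d1_left, d1_l3, l3_d1_1, l3_d1_2, l01_d1_l3]
  abel

lemma eta_snd_naturality_1 (x y z u : V0) (f : V1) (a : V2) :
    (Fq E (x, f, a) (y, 0, 0) (z, 0, 0) (u, 0, 0)).2.1 + (eta E T (x + d1 f) y z u).2 =
      (eta E T x y z u).2 + (Gq E (x, f, a) (y, 0, 0) (z, 0, 0) (u, 0, 0)).2.1 := by
  simp only [Fq, Gq, br2, eta_snd, Prod.snd_add, Prod.fst_add, map_zero, map_add, map_neg,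
    add_zero, zero_add, sub_eq_add_neg, neg_neg, neg_add, E.anti10, E.anti00 y (E.l00 z u),
    l00_add_left, l00_neg_right,
    l01_add_left, l01_add_right, l01_neg_left, l01_neg_right, l01_zero_left, l01_zero_right,
    l3_add_1, l3_neg_1, l00_d1_left, d1_l3, l3_d1_1, l01_d1_l3]
  abel

/- By `l02_l00`, both sides expand into the same combination of iterated actions
`ℓ₂(x, ℓ₂(y, ℓ₂(z, a)))`. -/
include T in
lemma Fq_snd_snd_eq_Gq_snd_snd_4 (x y z u : V0) (f : V1) (a : V2) :
    (Fq E (x, 0, 0) (y, 0, 0) (z, 0, 0) (u, f, a)).2.2 =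
      (Gq E (x, 0, 0) (y, 0, 0) (z, 0, 0) (u, f, a)).2.2 := by
  simp only [Fq, Gq, br2, Prod.snd_add, add_zero, zero_add, sub_eq_add_neg, neg_neg, neg_add,
    E.anti20, l02_add_right, l02_neg_right, l02_zero_right, l02_l00 T]
  abel

include T in
lemma Fq_snd_snd_eq_Gq_snd_snd_3 (x y z u : V0) (f : V1) (a : V2) :
    (Fq E (x, 0, 0) (y, 0, 0) (z, f, a) (u, 0, 0)).2.2 =
      (Gq E (x, 0, 0) (y, 0, 0) (z, f, a) (u, 0, 0)).2.2 := by
  simp only [Fq, Gq, br2, Prod.snd_add, add_zero, zero_add, sub_eq_add_neg, neg_neg, neg_add,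
    E.anti20, l02_add_right, l02_neg_right, l02_zero_right, l02_l00 T]
  abel

include T in
lemma Fq_snd_snd_eq_Gq_snd_snd_2 (x y z u : V0) (f : V1) (a : V2) :
    (Fq E (x, 0, 0) (y, f, a) (z, 0, 0) (u, 0, 0)).2.2 =
      (Gq E (x, 0, 0) (y, f, a) (z, 0, 0) (u, 0, 0)).2.2 := by
  simp only [Fq, Gq, br2, Prod.snd_add, add_zero, zero_add, sub_eq_add_neg, neg_neg, neg_add,
    E.anti20, l02_add_right, l02_neg_right, l02_zero_right, l02_l00 T]
  abel

include T in
lemma Fq_snd_snd_eq_Gq_snd_snd_1 (x y z u : V0) (f : V1) (a : V2) :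
    (Fq E (x, f, a) (y, 0, 0) (z, 0, 0) (u, 0, 0)).2.2 =
      (Gq E (x, f, a) (y, 0, 0) (z, 0, 0) (u, 0, 0)).2.2 := by
  simp only [Fq, Gq, br2, Prod.snd_add, add_zero, zero_add, sub_eq_add_neg, neg_neg, neg_add,
    E.anti20, l02_add_right, l02_neg_right, l02_zero_right, l02_l00 T]
  abel

def etaCell (m : V0 → V0 → V0 → V0 → V2) (x y z u : V0) : V0 × V1 × V2 :=
  ((eta E T x y z u).1, (eta E T x y z u).2, m x y z u)

section Naturality

variable (hdd : ∀ a, d1 (d2 a) = 0) (m : V0 → V0 → V0 → V0 → V2)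
  (x y z u : V0) (f : V1) (a : V2)
include hdd

lemma etaCell_natural_iff_4 :
    comp02 (Fq E (x, 0, 0) (y, 0, 0) (z, 0, 0) (u, f, a))
        (etaCell E T m x y z (t1 d1 (t2 d2 (u, f, a)))) =
      comp02 (etaCell E T m x y z u) (Gq E (x, 0, 0) (y, 0, 0) (z, 0, 0) (u, f, a)) ↔
    m x y z (u + d1 f) = m x y z u := by
  rw [t1_t2_mk hdd]
  exact comp02_mk_eq_comp02_mk_iff rfl (eta_snd_naturality_4 E T x y z u f a)
    (Fq_snd_snd_eq_Gq_snd_snd_4 E T x y z u f a)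

lemma etaCell_natural_iff_3 :
    comp02 (Fq E (x, 0, 0) (y, 0, 0) (z, f, a) (u, 0, 0))
        (etaCell E T m x y (t1 d1 (t2 d2 (z, f, a))) u) =
      comp02 (etaCell E T m x y z u) (Gq E (x, 0, 0) (y, 0, 0) (z, f, a) (u, 0, 0)) ↔
    m x y (z + d1 f) u = m x y z u := by
  rw [t1_t2_mk hdd]
  exact comp02_mk_eq_comp02_mk_iff rfl (eta_snd_naturality_3 E T x y z u f a)
    (Fq_snd_snd_eq_Gq_snd_snd_3 E T x y z u f a)

lemma etaCell_natural_iff_2 :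
    comp02 (Fq E (x, 0, 0) (y, f, a) (z, 0, 0) (u, 0, 0))
        (etaCell E T m x (t1 d1 (t2 d2 (y, f, a))) z u) =
      comp02 (etaCell E T m x y z u) (Gq E (x, 0, 0) (y, f, a) (z, 0, 0) (u, 0, 0)) ↔
    m x (y + d1 f) z u = m x y z u := by
  rw [t1_t2_mk hdd]
  exact comp02_mk_eq_comp02_mk_iff rfl (eta_snd_naturality_2 E T x y z u f a)
    (Fq_snd_snd_eq_Gq_snd_snd_2 E T x y z u f a)

lemma etaCell_natural_iff_1 :
    comp02 (Fq E (x, f, a) (y, 0, 0) (z, 0, 0) (u, 0, 0))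
        (etaCell E T m (t1 d1 (t2 d2 (x, f, a))) y z u) =
      comp02 (etaCell E T m x y z u) (Gq E (x, f, a) (y, 0, 0) (z, 0, 0) (u, 0, 0)) ↔
    m (x + d1 f) y z u = m x y z u := by
  rw [t1_t2_mk hdd]
  exact comp02_mk_eq_comp02_mk_iff rfl (eta_snd_naturality_1 E T x y z u f a)
    (Fq_snd_snd_eq_Gq_snd_snd_1 E T x y z u f a)

end Naturality

namespace Ell4

variable {E : Ell2 K V0 V1 V2 d1 d2} {T : Ell3 E} (Q : Ell4 E T)

lemma ext {Q' : Ell4 E T} (h : Q.l4 = Q'.l4) : Q = Q' := by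
  cases Q; cases Q'; cases h; rfl

lemma l4_add_1 (x x' y z u : V0) : Q.l4 (x + x') y z u = Q.l4 x y z u + Q.l4 x' y z u :=
  (Q.quad.2.2.2 y z u).map_add x x'
lemma l4_add_2 (x y y' z u : V0) : Q.l4 x (y + y') z u = Q.l4 x y z u + Q.l4 x y' z u :=
  (Q.quad.2.2.1 x z u).map_add y y'
lemma l4_add_3 (x y z z' u : V0) : Q.l4 x y (z + z') u = Q.l4 x y z u + Q.l4 x y z' u :=
  (Q.quad.2.1 x y u).map_add z z'
lemma l4_add_4 (x y z u u' : V0) : Q.l4 x y z (u + u') = Q.l4 x y z u + Q.l4 x y z u' :=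
  (Q.quad.1 x y z).map_add u u'
lemma l4_smul_1 (c : K) (x y z u : V0) : Q.l4 (c • x) y z u = c • Q.l4 x y z u :=
  (Q.quad.2.2.2 y z u).map_smul c x
lemma l4_smul_2 (c : K) (x y z u : V0) : Q.l4 x (c • y) z u = c • Q.l4 x y z u :=
  (Q.quad.2.2.1 x z u).map_smul c y
lemma l4_smul_3 (c : K) (x y z u : V0) : Q.l4 x y (c • z) u = c • Q.l4 x y z u :=
  (Q.quad.2.1 x y u).map_smul c z
lemma l4_smul_4 (c : K) (x y z u : V0) : Q.l4 x y z (c • u) = c • Q.l4 x y z u :=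
  (Q.quad.1 x y z).map_smul c u

lemma l4_d1_2 (f : V1) (x y z : V0) : Q.l4 x (d1 f) y z = 0 := by
  rw [Q.anti12, Q.cond2, neg_zero]
lemma l4_d1_3 (f : V1) (x y z : V0) : Q.l4 x y (d1 f) z = 0 := by
  rw [Q.anti23, l4_d1_2, neg_zero]
lemma l4_d1_4 (f : V1) (x y z : V0) : Q.l4 x y z (d1 f) = 0 := by
  rw [Q.anti34, l4_d1_3, neg_zero]

def toIdentiator (hdd : ∀ a, d1 (d2 a) = 0) : Identiator E T where
  mu := etaCell E T fun x y z u => -Q.l4 x y z u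
  quad := by
    refine ⟨fun x y z => ⟨fun u u' => ?_, fun c u => ?_⟩,
      fun x y u => ⟨fun z z' => ?_, fun c z => ?_⟩, fun x z u => ⟨fun y y' => ?_, fun c y => ?_⟩,
      fun y z u => ⟨fun x x' => ?_, fun c x => ?_⟩⟩ <;>
    simp only [etaCell, eta_fst, eta_snd, Prod.mk_add_mk, Prod.smul_mk, Prod.mk.injEq,
      smul_add, smul_sub, smul_neg, neg_add, true_and, and_true,
      l00_add_left, l00_add_right, l00_smul_left, l00_smul_right,
      l01_add_left, l01_add_right, l01_smul_left, l01_smul_right,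
      l3_add_1, l3_add_2, l3_add_3, l3_smul_1, l3_smul_2, l3_smul_3,
      l4_add_1, l4_add_2, l4_add_3, l4_add_4, l4_smul_1, l4_smul_2, l4_smul_3, l4_smul_4] <;>
    abel
  src _ _ _ _ := rfl
  tgt x y z u := by
    refine Prod.ext rfl ?_
    show (eta E T x y z u).2 + d2 (-Q.l4 x y z u) = (eps E T x y z u).2
    rw [map_neg, ← sub_eq_zero, ← neg_eq_zero, ← Q.cond1 x y z u]
    abel
  anti12 x y z u := by simp only [etaCell, Q.anti12 x y z u]
  anti23 x y z u := by simp only [etaCell, Q.anti23 x y z u]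
  anti34 x y z u := by simp only [etaCell, Q.anti34 x y z u]
  mod4 x y z u f a :=
    (etaCell_natural_iff_4 E T hdd _ x y z u f a).2 (by rw [l4_add_4, l4_d1_4, add_zero])
  mod3 x y z u f a :=
    (etaCell_natural_iff_3 E T hdd _ x y z u f a).2 (by rw [l4_add_3, l4_d1_3, add_zero])
  mod2 x y z u f a :=
    (etaCell_natural_iff_2 E T hdd _ x y z u f a).2 (by rw [l4_add_2, l4_d1_2, add_zero])
  mod1 x y z u f a :=
    (etaCell_natural_iff_1 E T hdd _ x y z u f a).2 (by rw [l4_add_1, Q.cond2, add_zero])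

end Ell4

namespace Identiator

variable {E : Ell2 K V0 V1 V2 d1 d2} {T : Ell3 E} (M : Identiator E T)

lemma ext {M' : Identiator E T} (h : M.mu = M'.mu) : M = M' := by
  cases M; cases M'; cases h; rfl

lemma mu_eq_etaCell : M.mu = etaCell E T fun x y z u => (M.mu x y z u).2.2 := by
  funext x y z u
  have h := M.src x y z u
  have h1 := congrArg Prod.fst h
  have h2 := congrArg Prod.snd h
  exact Prod.ext h1 (Prod.ext h2 rfl)

lemma mu_d1_snd_snd (hdd : ∀ a, d1 (d2 a) = 0) (f : V1) (y z u : V0) :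
    (M.mu (d1 f) y z u).2.2 = 0 := by
  have h := M.mod1 0 y z u f 0
  rw [M.mu_eq_etaCell, etaCell_natural_iff_1 E T hdd, zero_add] at h
  rw [h, (M.quad.2.2.2 y z u).map_zero, Prod.snd_zero, Prod.snd_zero]

def toEll4 (hdd : ∀ a, d1 (d2 a) = 0) : Ell4 E T where
  l4 x y z u := -(M.mu x y z u).2.2
  quad := ⟨fun x y z => isLinearMap_neg_snd_snd (M.quad.1 x y z),
    fun x y u => isLinearMap_neg_snd_snd (M.quad.2.1 x y u),
    fun x z u => isLinearMap_neg_snd_snd (M.quad.2.2.1 x z u),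
    fun y z u => isLinearMap_neg_snd_snd (M.quad.2.2.2 y z u)⟩
  anti12 x y z u := by rw [M.anti12]
  anti23 x y z u := by rw [M.anti23]
  anti34 x y z u := by rw [M.anti34]
  cond1 x y z u := by
    rw [map_neg, ← M.tgt x y z u, ← M.src x y z u]
    simp only [t2, s2]
    abel
  cond2 f y z u := by rw [M.mu_d1_snd_snd hdd, neg_zero]

end Identiator

def ell4EquivIdentiator (hdd : ∀ a, d1 (d2 a) = 0) : Ell4 E T ≃ Identiator E T where
  toFun Q := Q.toIdentiator hdd
  invFun M := M.toEll4 hdd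
  left_inv Q := Ell4.ext _ <| by
    simp only [Ell4.toIdentiator, Identiator.toEll4, etaCell, neg_neg]
  right_inv M := Identiator.ext _ <| by
    simp only [Ell4.toIdentiator, Identiator.toEll4, neg_neg]
    exact M.mu_eq_etaCell.symm

end GV

open GV

/-- The assignment `ℓ₄ ↦ μ`,
`μ_{xyzu} = ([[[x,y],z],u], h_{xyzu}, −ℓ₄(x,y,z,u))`, is a bijection between
antisymmetric quadrilinear maps `ℓ₄ : V₀⁴ → V₂` satisfying the L∞ condition `n = 4`
and skew-symmetric quadrilinear 2-modifications `μ : η ⇛ ε` (Identiators). -/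
theorem identiator_ell4_correspondence (K : Type) [Field K]
    (V0 V1 V2 : Type) [AddCommGroup V0] [AddCommGroup V1] [AddCommGroup V2]
    [Module K V0] [Module K V1] [Module K V2]
    (d1 : V1 →ₗ[K] V0) (d2 : V2 →ₗ[K] V1) (hdd : ∀ a, d1 (d2 a) = 0)
    (E : Ell2 K V0 V1 V2 d1 d2) (T : Ell3 E) :
    ∃ Φ : Ell4 E T ≃ Identiator E T,
      ∀ (Q : Ell4 E T) (x y z u : V0),
        (Φ Q).mu x y z u =
          ((eta E T x y z u).1, (eta E T x y z u).2, -Q.l4 x y z u) :=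
  ⟨ell4EquivIdentiator E T hdd, fun _ _ _ _ _ => rfl⟩
end
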